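/- arXiv:2604.28092 — 11 statements merged into one kernel-verified Lean document; each statement's English description precedes it below -/
import Mathlib

section
/- For any topological space X and any point p ∈ X, if p has a local π-base of cardinality at most κ (κ an infinite cardinal), then p has a centered local π-base of cardinality at most 2^κ. Consequently πχc(X) ≤ 2^{πχ(X)}. -/
open Set Topology Cardinal

universe u

/-- A local π-base at `p`: a family of nonempty open sets such that every open
set containing `p` contains a member of the family. -/
def IsLocalPiBase {X : Type u} [TopologicalSpace X] (p : X) (𝓑 : Set (Set X)) : Prop :=
  (∀ b ∈ 𝓑, IsOpen b ∧ b.Nonempty) ∧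
  ∀ U : Set X, IsOpen U → p ∈ U → ∃ b ∈ 𝓑, b ⊆ U

/-- A family of sets is centered if it has the finite intersection property. -/
def Centered {X : Type u} (𝓑 : Set (Set X)) : Prop :=
  ∀ F : Finset (Set X), F.Nonempty → ↑F ⊆ 𝓑 → (⋂₀ (F : Set (Set X))).Nonempty

/-- A family of sets is linked if any two members meet. -/
def Linked {X : Type u} (𝓑 : Set (Set X)) : Prop :=
  ∀ b₁ ∈ 𝓑, ∀ b₂ ∈ 𝓑, (b₁ ∩ b₂).Nonempty

/-- A decreasing local π-base at `p`, given as a ⊆-decreasing sequence of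
nonempty open sets. -/
def IsDecreasingLocalPiBase {X : Type u} [TopologicalSpace X] (p : X) (A : ℕ → Set X) : Prop :=
  (∀ n, IsOpen (A n) ∧ (A n).Nonempty) ∧
  (∀ n, A (n + 1) ⊆ A n) ∧
  ∀ U : Set X, IsOpen U → p ∈ U → ∃ n, A n ⊆ U

/-- A cellular family: pairwise disjoint nonempty open sets. -/
def IsCellular {X : Type u} [TopologicalSpace X] (𝓒 : Set (Set X)) : Prop :=
  (∀ c ∈ 𝓒, IsOpen c ∧ c.Nonempty) ∧ 𝓒.PairwiseDisjoint id

/-- A weak closed pseudobase at `p`: a family of open sets whose closures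
intersect exactly in `{p}`. -/
def IsWeakClosedPseudobase {X : Type u} [TopologicalSpace X] (p : X) (𝓑 : Set (Set X)) : Prop :=
  (∀ b ∈ 𝓑, IsOpen b) ∧ (⋂ b ∈ 𝓑, closure b) = {p}

/-- A neighborhood base at `p` consisting of open sets containing `p`. -/
def IsNhdBase {X : Type u} [TopologicalSpace X] (p : X) (𝓑 : Set (Set X)) : Prop :=
  (∀ b ∈ 𝓑, IsOpen b ∧ p ∈ b) ∧
  ∀ U : Set X, IsOpen U → p ∈ U → ∃ b ∈ 𝓑, b ⊆ U

open Filter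

/-!
The subfamilies of `𝓑` that contain every member of `𝓑` lying inside some neighbourhood of `p`
form a proper filter `(𝓝 p).smallSets ⊓ 𝓟 𝓑` on `Set X`, and the unions of its members form a local
π-base at `p` of size at most `2 ^ #𝓑`. It is centered because finitely many members of a proper
filter share a common element `b`, a nonempty set contained in each of the unions.
-/

variable {X : Type u}

theorem centered_of_eventually_subset {f : Filter (Set X)} [f.NeBot] {𝓒 : Set (Set X)}
    (hne : ∀ᶠ b in f, b.Nonempty) (hsub : ∀ c ∈ 𝓒, ∀ᶠ b in f, b ⊆ c) : Centered 𝓒 := by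
  intro F _ hF𝓒
  obtain ⟨b, ⟨x, hx⟩, hbF⟩ :=
    (hne.and ((F.eventually_all).2 fun c hc => hsub c (hF𝓒 hc))).exists
  exact ⟨x, fun c hc => hbF c hc hx⟩

theorem mk_sUnion_image_le_two_pow (f : Filter (Set X)) (𝓑 : Set (Set X)) :
    #(sUnion '' {s | s ∈ f ∧ s ⊆ 𝓑}) ≤ 2 ^ #𝓑 :=
  calc #(sUnion '' {s | s ∈ f ∧ s ⊆ 𝓑})
      ≤ #{s | s ∈ f ∧ s ⊆ 𝓑} := mk_image_le
    _ ≤ #(𝒫 𝓑) := mk_le_mk_of_subset fun _ hs => hs.2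
    _ = 2 ^ #𝓑 := mk_powerset 𝓑

variable [TopologicalSpace X] {p : X} {𝓑 : Set (Set X)}

theorem IsLocalPiBase.neBot (h𝓑 : IsLocalPiBase p 𝓑) : ((𝓝 p).smallSets ⊓ 𝓟 𝓑).NeBot := by
  refine inf_principal_neBot_iff.2 fun 𝓤 h𝓤 => ?_
  obtain ⟨U, ⟨hpU, hU⟩, h𝒫U⟩ := (nhds_basis_opens p).smallSets.mem_iff.1 h𝓤
  obtain ⟨b, hb, hbU⟩ := h𝓑.2 U hU hpU
  exact ⟨b, h𝒫U hbU, hb⟩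

theorem IsLocalPiBase.sUnion_image (h𝓑 : IsLocalPiBase p 𝓑) :
    IsLocalPiBase p (sUnion '' {s | s ∈ (𝓝 p).smallSets ⊓ 𝓟 𝓑 ∧ s ⊆ 𝓑}) := by
  have := h𝓑.neBot
  constructor
  · rintro _ ⟨s, ⟨hs, hs𝓑⟩, rfl⟩
    obtain ⟨b, hb⟩ := Filter.nonempty_of_mem hs
    exact ⟨isOpen_sUnion fun b hb => (h𝓑.1 b (hs𝓑 hb)).1,
      (h𝓑.1 b (hs𝓑 hb)).2.mono (subset_sUnion_of_mem hb)⟩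
  · intro U hU hpU
    have h𝒫U : 𝒫 U ∩ 𝓑 ∈ (𝓝 p).smallSets ⊓ 𝓟 𝓑 :=
      inter_mem_inf (mem_lift' (hU.mem_nhds hpU)) (mem_principal_self 𝓑)
    exact ⟨_, ⟨_, ⟨h𝒫U, inter_subset_right⟩, rfl⟩, sUnion_subset fun _ hb => hb.1⟩

theorem IsLocalPiBase.centered_sUnion_image (h𝓑 : IsLocalPiBase p 𝓑) :
    Centered (sUnion '' {s | s ∈ (𝓝 p).smallSets ⊓ 𝓟 𝓑 ∧ s ⊆ 𝓑}) := by
  have := h𝓑.neBot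
  refine centered_of_eventually_subset (f := (𝓝 p).smallSets ⊓ 𝓟 𝓑) ?_ ?_
  · exact mem_of_superset (mem_inf_of_right (mem_principal_self 𝓑)) fun b hb => (h𝓑.1 b hb).2
  · rintro _ ⟨s, ⟨hs, -⟩, rfl⟩
    exact mem_of_superset hs fun _ => subset_sUnion_of_mem

theorem centered_localPiBase_le_two_pow_general
    {X : Type u} [TopologicalSpace X] (p : X) (κ : Cardinal.{u})
    (h : ∃ 𝓑 : Set (Set X), IsLocalPiBase p 𝓑 ∧ #𝓑 ≤ κ) :
    ∃ 𝓒 : Set (Set X), IsLocalPiBase p 𝓒 ∧ Centered 𝓒 ∧ #𝓒 ≤ 2 ^ κ := by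
  obtain ⟨𝓑, h𝓑, hcard⟩ := h
  exact ⟨_, h𝓑.sUnion_image, h𝓑.centered_sUnion_image,
    (mk_sUnion_image_le_two_pow _ 𝓑).trans (power_le_power_left two_ne_zero hcard)⟩

/-- if `p` has a local π-base of cardinality at most `κ`, then it has
a centered local π-base of cardinality at most `2 ^ κ`; i.e. πχc(X) ≤ 2^{πχ(X)}. -/
theorem centered_localPiBase_le_two_pow
    {X : Type u} [TopologicalSpace X] (p : X) (κ : Cardinal.{u}) (hκ : ℵ₀ ≤ κ)
    (h : ∃ 𝓑 : Set (Set X), IsLocalPiBase p 𝓑 ∧ #𝓑 ≤ κ) :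
    ∃ 𝓒 : Set (Set X), IsLocalPiBase p 𝓒 ∧ Centered 𝓒 ∧ #𝓒 ≤ 2 ^ κ :=
  centered_localPiBase_le_two_pow_general p κ h
end

section
/- Let X be a Hausdorff space and κ an infinite cardinal. Suppose every family of pairwise disjoint nonempty open sets in X has cardinality at most κ, and every point of X has a linked local π-base of cardinality at most κ. Then |X| ≤ 2^κ. -/
open Set Topology Cardinal

universe u

open Order Function

/-!
Give every point `p` an enumeration `e p : κ → Set X` of a linked local π-base, and colour a pair
`{p, q}` of distinct points by a pair of indices `(i, j)` such that `e p i ∩ e p j` and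
`e q i ∩ e q j` are disjoint; such indices exist by the Hausdorff property, and the condition is
symmetric in `p` and `q`. If `|X| > 2^κ`, the Erdős–Rado theorem `(2^κ)⁺ → (κ⁺)²_κ` yields `κ⁺`
points with the same colour `(i, j)`, and their sets `e p i ∩ e p j`, nonempty since the π-bases
are linked, form a cellular family of size `κ⁺`.

Erdős–Rado is proved in the usual way: a set `A` of size `≤ 2^κ` realizing every type over its
subsets of size `≤ κ` yields, for a point `z ∉ A`, a `κ⁺`-sequence in `A` whose colour with each
later term equals its colour with `z`; pigeonhole on the colours with `z` finishes.
-/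

theorem exists_transfinite_seq {I β : Type*} [Preorder I] [WellFoundedLT I]
    (P : ∀ i : I, (Iio i → β) → β → Prop) (h : ∀ i g, ∃ b, P i g b) :
    ∃ a : I → β, ∀ i, P i (fun j => a j) (a i) := by
  choose next hnext using h
  refine ⟨wellFounded_lt.fix fun i rec => next i fun j => rec j j.2, fun i => ?_⟩
  rw [WellFounded.fix_eq]
  exact hnext _ _

namespace Cardinal

variable {α C : Type u} {κ : Cardinal.{u}}

theorem mk_iUnion_le_of_le {ι : Type u} {c : Cardinal.{u}} (hc : ℵ₀ ≤ c) {s : ι → Set α}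
    (hι : #ι ≤ c) (hs : ∀ i, #(s i) ≤ c) : #(⋃ i, s i) ≤ c :=
  (mk_iUnion_le s).trans <| (mul_le_mul' hι (ciSup_le' hs)).trans (mul_eq_self hc).le

theorem mk_Iio_le_of_toType_succ_ord (i : (succ κ).ord.ToType) : #(Iio i) ≤ κ :=
  lt_succ_iff.1 (by simpa using mk_Iio_lt i)

theorem exists_forall_lt_of_mk_le_of_toType_succ_ord (hκ : ℵ₀ ≤ κ)
    {s : Set (succ κ).ord.ToType} (hs : #s ≤ κ) : ∃ i, ∀ j ∈ s, j < i := by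
  have hcof : Order.cof (succ κ).ord.ToType = succ κ := by
    rw [Ordinal.cof_toType, (isRegular_succ hκ).cof_ord]
  have : ¬ IsCofinal s := fun h => (hs.trans_lt (lt_succ κ)).not_ge (hcof.ge.trans (cof_le h))
  simpa [IsCofinal] using this

theorem two_pow_pow_self (hκ : ℵ₀ ≤ κ) : ((2 : Cardinal) ^ κ) ^ κ = 2 ^ κ := by
  rw [← power_mul, mul_eq_self hκ]

theorem mk_bounded_subset_le_two_pow (hκ : ℵ₀ ≤ κ) {S : Set α} (hS : #S ≤ 2 ^ κ) :
    #{s : Set α // s ⊆ S ∧ #s ≤ κ} ≤ 2 ^ κ :=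
  (mk_bounded_subset_le S κ).trans <| (power_le_power_right
    (max_le hS (hκ.trans (cantor κ).le))).trans (two_pow_pow_self hκ).le

theorem exists_mk_le_two_pow_closed_under (hκ : ℵ₀ ≤ κ) (g : Set α → Set α)
    (hg : ∀ s : Set α, #s ≤ κ → #(g s) ≤ 2 ^ κ) :
    ∃ A : Set α, #A ≤ 2 ^ κ ∧ ∀ s ⊆ A, #s ≤ κ → g s ⊆ A := by
  have h2κ : ℵ₀ ≤ 2 ^ κ := hκ.trans (cantor κ).le
  let close (S : Set α) : Set α := ⋃ s : {s : Set α // s ⊆ S ∧ #s ≤ κ}, g s.1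
  have mk_close_le {S : Set α} (hS : #S ≤ 2 ^ κ) : #(close S) ≤ 2 ^ κ :=
    mk_iUnion_le_of_le h2κ (mk_bounded_subset_le_two_pow hκ hS) fun s => hg s.1 s.2.2
  obtain ⟨A, hA⟩ := exists_transfinite_seq (I := (succ κ).ord.ToType)
    (fun _ B S => S = close (⋃ j, B j)) fun _ _ => ⟨_, rfl⟩
  have mk_A_le (i) : #(A i) ≤ 2 ^ κ := by
    induction i using WellFoundedLT.induction with
    | ind i ih =>
      rw [hA i]
      exact mk_close_le <| mk_iUnion_le_of_le h2κ
        ((mk_Iio_le_of_toType_succ_ord i).trans (cantor κ).le) fun j => ih j j.2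
  refine ⟨⋃ i, A i, mk_iUnion_le_of_le h2κ ?_ mk_A_le, fun s hs hsκ => ?_⟩
  · rw [mk_ord_toType]
    exact succ_le_of_lt (cantor κ)
  -- the stages at which the points of `s` appear are bounded, by regularity of `κ⁺`
  choose stage h_stage using fun b : s => mem_iUnion.1 (hs b.2)
  obtain ⟨i, hi⟩ := exists_forall_lt_of_mk_le_of_toType_succ_ord hκ
    (mk_range_le.trans hsκ : #(range stage) ≤ κ)
  have hs_sub : s ⊆ ⋃ j : Iio i, A j := fun b hb =>
    mem_iUnion.2 ⟨⟨stage ⟨b, hb⟩, hi _ (mem_range_self _)⟩, h_stage ⟨b, hb⟩⟩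
  calc g s ⊆ A i := (hA i).symm ▸ subset_iUnion_of_subset ⟨s, hs_sub, hsκ⟩ subset_rfl
    _ ⊆ ⋃ i, A i := subset_iUnion A i

/-- The type of `y` over `s` is the map `b ↦ f b y` on `s`. -/
def RealizesSmallTypes (f : α → α → C) (κ : Cardinal.{u}) (A : Set α) : Prop :=
  ∀ s ⊆ A, #s ≤ κ → ∀ y ∉ s, ∃ a ∈ A, a ∉ s ∧ ∀ b ∈ s, f b a = f b y

theorem exists_mk_le_two_pow_realizesSmallTypes (hκ : ℵ₀ ≤ κ) (hC : #C ≤ 2 ^ κ)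
    (f : α → α → C) : ∃ A : Set α, #A ≤ 2 ^ κ ∧ RealizesSmallTypes f κ A := by
  let type (s : Set α) (y : ↥sᶜ) : s → C := fun b => f b y
  -- close up under picking one realization outside `s` of each type over `s`
  let pick (s : Set α) : Set α := range fun t : range (type s) => (rangeSplitting (type s) t).1
  obtain ⟨A, hA_le, hA⟩ := exists_mk_le_two_pow_closed_under hκ pick fun s hs => by
    calc #(pick s) ≤ #(s → C) := mk_range_le.trans (mk_set_le _)
      _ ≤ 2 ^ κ := by
        rw [← power_def]
        exact (power_le_power_right hC).trans <|
          (power_le_power_left (power_ne_zero κ two_ne_zero) hs).trans (two_pow_pow_self hκ).le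
  refine ⟨A, hA_le, fun s hsA hs y hy => ?_⟩
  set a := rangeSplitting (type s) ⟨_, mem_range_self ⟨y, hy⟩⟩
  have ha : type s a = type s ⟨y, hy⟩ := apply_rangeSplitting _ _
  exact ⟨a, hA s hsA hs (mem_range_self _), a.2, fun b hb => congrFun ha ⟨b, hb⟩⟩

theorem RealizesSmallTypes.exists_injective_endHomogeneous {f : α → α → C} {A : Set α}
    (hA : RealizesSmallTypes f κ A) {z : α} (hz : z ∉ A) :
    ∃ a : (succ κ).ord.ToType → α, Injective a ∧ ∀ i j, j < i → f (a j) (a i) = f (a j) z := by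
  obtain ⟨a, ha⟩ := exists_transfinite_seq (β := A)
    (fun _ prev x => (x : α) ∉ range (fun j => (prev j : α)) ∧ ∀ j, f (prev j) x = f (prev j) z)
    fun i prev => by
      have hprev : range (fun j => (prev j : α)) ⊆ A := range_subset_iff.2 fun j => (prev j).2
      obtain ⟨x, hxA, hx, hfx⟩ := hA _ hprev (mk_range_le.trans (mk_Iio_le_of_toType_succ_ord i))
        z fun hz' => hz (hprev hz')
      exact ⟨⟨x, hxA⟩, hx, fun j => hfx _ (mem_range_self j)⟩
  refine ⟨fun i => a i, Injective.of_lt_imp_ne fun j i hji h => (ha i).1 ⟨⟨j, hji⟩, h⟩,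
    fun i j hji => (ha i).2 ⟨j, hji⟩⟩

theorem exists_homogeneous_of_two_pow_lt (hκ : ℵ₀ ≤ κ) (hC : #C ≤ κ) (hα : 2 ^ κ < #α)
    (f : Sym2 α → C) : ∃ H : Set α, ∃ c, κ < #H ∧ ∀ x ∈ H, ∀ y ∈ H, x ≠ y → f s(x, y) = c := by
  obtain ⟨A, hA_le, hA⟩ :=
    exists_mk_le_two_pow_realizesSmallTypes hκ (hC.trans (cantor κ).le) fun x y => f s(x, y)
  obtain ⟨z, hz⟩ : ∃ z, z ∉ A := by
    by_contra! h
    exact (hA_le.trans_lt hα).ne (by rw [eq_univ_of_forall h, mk_univ])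
  obtain ⟨a, ha_inj, ha⟩ := hA.exists_injective_endHomogeneous hz
  obtain ⟨c, hc⟩ := infinite_pigeonhole_card (fun i => f s(a i, z)) (succ κ)
    (by rw [mk_ord_toType]) (hκ.trans (le_succ κ))
    (by rw [(isRegular_succ hκ).cof_ord]; exact hC.trans_lt (lt_succ κ))
  refine ⟨a '' ((fun i => f s(a i, z)) ⁻¹' {c}), c, ?_, ?_⟩
  · rw [mk_image_eq ha_inj]
    exact succ_le_iff.1 hc
  · rintro _ ⟨i, hi, rfl⟩ _ ⟨j, hj, rfl⟩ hne
    rcases lt_or_gt_of_ne (ne_of_apply_ne a hne) with h | h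
    · rw [ha j i h]
      exact hi
    · rw [Sym2.eq_swap, ha i j h]
      exact hj

end Cardinal

section Topology

variable {X ι : Type u} [TopologicalSpace X]

theorem Set.Nonempty.exists_range_eq_of_mk_le {β : Type u} {s : Set β} (hs : s.Nonempty)
    (h : #s ≤ #ι) : ∃ e : ι → β, range e = s := by
  have : Nonempty s := hs.to_subtype
  obtain ⟨e, he⟩ := exists_surjective_iff.2 ⟨inferInstance, (le_def _ _).1 h⟩
  exact ⟨(↑) ∘ e, by rw [he.range_comp, Subtype.range_coe]⟩

theorem mk_le_two_pow_of_forall_ne_exists_disjoint {κ : Cardinal.{u}} (hκ : ℵ₀ ≤ κ)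
    (hι : #ι ≤ κ) (hc : ∀ 𝓒 : Set (Set X), IsCellular 𝓒 → #𝓒 ≤ κ) (W : X → ι → Set X)
    (hW : ∀ p k, IsOpen (W p k) ∧ (W p k).Nonempty)
    (hsep : ∀ p q, p ≠ q → ∃ k, Disjoint (W p k) (W q k)) : #X ≤ 2 ^ κ := by
  by_contra! hX
  have : Nontrivial X :=
    one_lt_iff_nontrivial.1 ((one_lt_aleph0.trans_le (hκ.trans (cantor κ).le)).trans hX)
  obtain ⟨p, q, hpq⟩ := exists_pair_ne X
  have : Nonempty ι := let ⟨k, _⟩ := hsep p q hpq; ⟨k⟩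
  let color : Sym2 X → ι := Sym2.lift
    ⟨fun p q => Classical.epsilon fun k => Disjoint (W p k) (W q k),
      fun p q => by simp_rw [disjoint_comm]⟩
  obtain ⟨H, k, hH, hk⟩ := exists_homogeneous_of_two_pow_lt hκ hι hX color
  have hdisj : H.Pairwise fun p q => Disjoint (W p k) (W q k) := fun p hp q hq hpq =>
    hk p hp q hq hpq ▸ Classical.epsilon_spec (hsep p q hpq)
  have hinj : InjOn (W · k) H := fun p hp q hq h => by_contra fun hpq =>
    (hW p k).2.ne_empty (by simpa [h] using hdisj hp hq hpq)
  have hcell : IsCellular ((W · k) '' H) :=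
    ⟨by rintro _ ⟨p, -, rfl⟩; exact hW p k, hinj.pairwiseDisjoint_image.2 hdisj⟩
  exact (hc _ hcell).not_gt (by rwa [mk_image_eq_of_injOn _ _ hinj])

theorem exists_disjoint_inter_of_isLocalPiBase [T2Space X] {p q : X} (hpq : p ≠ q)
    {e e' : ι → Set X} (he : IsLocalPiBase p (range e)) (he' : IsLocalPiBase q (range e')) :
    ∃ k : ι × ι, Disjoint (e k.1 ∩ e k.2) (e' k.1 ∩ e' k.2) := by
  obtain ⟨U, V, hU, hV, hpU, hqV, hUV⟩ := t2_separation hpq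
  obtain ⟨_, ⟨i, rfl⟩, hi⟩ := he.2 U hU hpU
  obtain ⟨_, ⟨j, rfl⟩, hj⟩ := he'.2 V hV hqV
  exact ⟨(i, j), hUV.mono (inter_subset_left.trans hi) (inter_subset_right.trans hj)⟩

end Topology

/-- Hausdorff space with cellularity ≤ κ in which every point has a
linked local π-base of cardinality ≤ κ has cardinality ≤ 2^κ. -/
theorem card_le_two_pow_of_cellular_and_linked
    {X : Type u} [TopologicalSpace X] [T2Space X] (κ : Cardinal.{u}) (hκ : ℵ₀ ≤ κ)
    (hc : ∀ 𝓒 : Set (Set X), IsCellular 𝓒 → #𝓒 ≤ κ)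
    (hπ : ∀ p : X, ∃ 𝓑 : Set (Set X), IsLocalPiBase p 𝓑 ∧ Linked 𝓑 ∧ #𝓑 ≤ κ) :
    #X ≤ 2 ^ κ := by
  have enum (p : X) :
      ∃ e : κ.ord.ToType → Set X, IsLocalPiBase p (range e) ∧ Linked (range e) := by
    obtain ⟨𝓑, h𝓑, h𝓑_linked, h𝓑_le⟩ := hπ p
    obtain ⟨b, hb, -⟩ := h𝓑.2 univ isOpen_univ (mem_univ p)
    obtain ⟨e, rfl⟩ := Set.Nonempty.exists_range_eq_of_mk_le (ι := κ.ord.ToType) ⟨b, hb⟩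
      (by rwa [mk_ord_toType])
    exact ⟨e, h𝓑, h𝓑_linked⟩
  choose e he he_linked using enum
  refine mk_le_two_pow_of_forall_ne_exists_disjoint (ι := κ.ord.ToType × κ.ord.ToType) hκ
    (by rw [mk_prod, lift_id, mk_ord_toType, mul_eq_self hκ]) hc (fun p k => e p k.1 ∩ e p k.2)
    (fun p k => ⟨((he p).1 _ ⟨k.1, rfl⟩).1.inter ((he p).1 _ ⟨k.2, rfl⟩).1,
      he_linked p _ ⟨k.1, rfl⟩ _ ⟨k.2, rfl⟩⟩)
    fun p q hpq => exists_disjoint_inter_of_isLocalPiBase hpq (he p) (he q)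
end

section
/- If X is a Hausdorff space with the countable chain condition (every family of pairwise disjoint nonempty open sets is countable) in which every point has a countable linked local π-base, then |X| ≤ 2^{ℵ₀}. -/
/-!
Well-order `X` and colour a pair `p < q` by indices `(m, n)` such that the `m`-th member of the
π-base at `p` misses the `n`-th member of the π-base at `q`; such indices exist because `X` is
Hausdorff. If `|X| > 𝔠`, the Erdős–Rado theorem `(2^ℵ₀)⁺ → (ℵ₁)²_ℵ₀` yields an uncountable set
`H` on which the colour is a constant `(m, n)`. The sets `B_p(m) ∩ B_p(n)`, `p ∈ H`, are then
nonempty (the π-bases are linked) and pairwise disjoint, contradicting the countable chain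
condition.
-/

open Set Topology Cardinal

universe u

universe v

theorem Cardinal.mk_arrow_le_continuum {α : Type u} {β : Type v} [Countable α] [Countable β] :
    #(α → β) ≤ 𝔠 := by
  rw [mk_arrow, ← aleph0_power_aleph0]
  calc lift.{u} #β ^ lift.{v} #α ≤ ℵ₀ ^ lift.{v} #α :=
        power_le_power_right (lift_le_aleph0.2 mk_le_aleph0)
    _ ≤ ℵ₀ ^ ℵ₀ := power_le_power_left aleph0_ne_zero (lift_le_aleph0.2 mk_le_aleph0)

theorem exists_uncountable_homogeneous_of_strictMono {I W κ : Type*} [LinearOrder I]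
    [Preorder W] [Uncountable I] [Countable κ] {s : I → W} (hs : StrictMono s)
    {f : W → W → κ} (c : I → κ) (hc : ∀ δ γ, δ < γ → f (s δ) (s γ) = c δ) :
    ∃ H : Set W, ¬H.Countable ∧ ∃ k, ∀ p ∈ H, ∀ q ∈ H, p < q → f p q = k := by
  obtain ⟨k, hk⟩ : ∃ k, ¬(c ⁻¹' {k}).Countable := by
    by_contra! h
    have huniv := Set.countable_iUnion h
    rw [← Set.preimage_iUnion, Set.iUnion_of_singleton, Set.preimage_univ] at huniv
    exact not_countable (Set.countable_univ_iff.mp huniv)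
  refine ⟨s '' (c ⁻¹' {k}), fun hcount =>
    hk (countable_of_injective_of_countable_image hs.injective.injOn hcount), k, ?_⟩
  rintro _ ⟨δ, hδ, rfl⟩ _ ⟨γ, -, rfl⟩ hlt
  rw [hc δ γ (hs.lt_iff_lt.1 hlt)]
  exact hδ

namespace ErdosRado

section Branch

variable {W I κ : Type*} [LinearOrder W] [WellFoundedLT W]
  [LinearOrder I] [WellFoundedLT I]

open Classical in
/-- At each stage take the least new point that every earlier point colours as it colours `a`;
`a` itself qualifies until it has been taken. -/
noncomputable def branch (f : W → W → κ) (a : W) : I → W :=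
  wellFounded_lt.fix fun γ s =>
    if h : {x | ∀ δ (hδ : δ < γ), s δ hδ ≠ x ∧ f (s δ hδ) x = f (s δ hδ) a}.Nonempty then
      wellFounded_lt.min _ h
    else a

variable {f : W → W → κ} {a : W}

variable (f a) in
def candidates (γ : I) : Set W :=
  {x | ∀ δ < γ, branch f a δ ≠ x ∧ f (branch f a δ) x = f (branch f a δ) a}

open Classical in
theorem branch_eq (γ : I) :
    branch f a γ = if h : (candidates f a γ).Nonempty then wellFounded_lt.min _ h else a := by
  rw [branch, WellFounded.fix_eq]
  rfl

theorem candidates_antitone : Antitone (candidates f a : I → Set W) :=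
  fun _ _ hδγ _ hx δ hδ => hx δ (hδ.trans_le hδγ)

theorem branch_mem_candidates {γ : I} (h : (candidates f a γ).Nonempty) :
    branch f a γ ∈ candidates f a γ := by
  rw [branch_eq, dif_pos h]
  exact wellFounded_lt.min_mem _ h

theorem branch_le_of_mem_candidates {γ : I} {x : W} (hx : x ∈ candidates f a γ) :
    branch f a γ ≤ x := by
  rw [branch_eq, dif_pos ⟨x, hx⟩]
  exact wellFounded_lt.min_le hx

theorem self_mem_candidates {γ : I} (h : ∀ δ < γ, branch f a δ ≠ a) : a ∈ candidates f a γ :=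
  fun δ hδ => ⟨h δ hδ, rfl⟩

theorem branch_eq_branch_of_colors_eq {b : W} {γ : I}
    (hcol : ∀ δ < γ, f (branch f a δ) a = f (branch f b δ) b)
    (hna : ∀ δ < γ, branch f a δ ≠ a) : branch f a γ = branch f b γ := by
  induction γ using WellFoundedLT.induction with
  | _ γ ih =>
    have hprev : ∀ δ < γ, branch f a δ = branch f b δ := fun δ hδ =>
      ih δ hδ (fun ε hε => hcol ε (hε.trans hδ)) (fun ε hε => hna ε (hε.trans hδ))
    have hcand : candidates f a γ = candidates f b γ := by
      ext x
      refine forall₂_congr fun δ hδ => ?_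
      rw [hcol δ hδ, hprev δ hδ]
    have hne : (candidates f b γ).Nonempty := hcand ▸ ⟨a, self_mem_candidates hna⟩
    rw [branch_eq, branch_eq, hcand, dif_pos hne, dif_pos hne]

theorem eq_of_colors_eq {b : W} {γ : I} (ha : branch f a γ = a) (hb : branch f b γ = b)
    (hna : ∀ δ < γ, branch f a δ ≠ a)
    (hcol : ∀ δ < γ, f (branch f a δ) a = f (branch f b δ) b) : a = b := by
  rw [← ha, ← hb, branch_eq_branch_of_colors_eq hcol hna]

section Unreached

variable (ha : ∀ γ : I, branch f a γ ≠ a)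
include ha

theorem branch_mem_candidates_of_unreached (γ : I) : branch f a γ ∈ candidates f a γ :=
  branch_mem_candidates ⟨a, self_mem_candidates fun δ _ => ha δ⟩

theorem strictMono_branch : StrictMono (branch f a : I → W) := fun δ γ hδγ =>
  (branch_le_of_mem_candidates (candidates_antitone hδγ.le
    (branch_mem_candidates_of_unreached ha γ))).lt_of_ne
    ((branch_mem_candidates_of_unreached ha γ) δ hδγ).1

theorem color_branch_branch {δ γ : I} (hδγ : δ < γ) :
    f (branch f a δ) (branch f a γ) = f (branch f a δ) a :=
  ((branch_mem_candidates_of_unreached ha γ) δ hδγ).2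

end Unreached

end Branch

variable {W : Type u} {I : Type u} {κ : Type v} [LinearOrder W] [WellFoundedLT W]
  [LinearOrder I] [WellFoundedLT I] {f : W → W → κ}

theorem lift_mk_le_sum_of_forall_reached (h : ∀ a : W, ∃ γ : I, branch f a γ = a) :
    lift.{v} #W ≤ sum fun γ : I => #(Iio γ → κ) := by
  let reachedAt (γ : I) : Set W := {a | branch f a γ = a ∧ ∀ δ < γ, branch f a δ ≠ a}
  have hcover : ⋃ γ, reachedAt γ = Set.univ := by
    refine eq_univ_of_forall fun a => mem_iUnion.2 ?_
    obtain ⟨γ, hγ, hmin⟩ := wellFounded_lt.has_min {γ : I | branch f a γ = a} (h a)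
    exact ⟨γ, hγ, fun δ hδ hδa => hmin δ hδa hδ⟩
  have hfiber (γ : I) : lift.{v} #(reachedAt γ) ≤ #(Iio γ → κ) := by
    have hinj : Function.Injective
        fun a : reachedAt γ => fun δ : Iio γ => f (branch f a (δ : I)) a :=
      fun a b hab => Subtype.ext <| eq_of_colors_eq a.2.1 b.2.1 a.2.2 fun δ hδ =>
        congrFun hab ⟨δ, hδ⟩
    have := lift_mk_le_lift_mk_of_injective hinj
    rwa [lift_umax.{u, v}, lift_id'.{u, v}] at this
  calc lift.{v} #W = lift.{v} #(⋃ γ, reachedAt γ) := by rw [hcover, mk_univ]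
    _ ≤ lift.{v} (sum fun γ => #(reachedAt γ)) := lift_le.2 mk_iUnion_le_sum_mk
    _ = sum fun γ => lift.{v} #(reachedAt γ) := lift_sum _
    _ ≤ sum fun γ : I => #(Iio γ → κ) := sum_le_sum _ _ hfiber

end ErdosRado

open ErdosRado in
/-- Run the branches through `ω₁`. If some point is never reached by its own branch, that branch
is end-homogeneous of length `ω₁` and pigeonhole finishes; otherwise every point is coded by a
countable sequence of colours, so `|W| ≤ ℵ₁ · 𝔠 = 𝔠`. -/
theorem exists_uncountable_homogeneous_of_continuum_lt_mk {W : Type u} {κ : Type v}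
    [LinearOrder W] [WellFoundedLT W] [Countable κ] (hW : 𝔠 < #W) (f : W → W → κ) :
    ∃ H : Set W, ¬H.Countable ∧ ∃ k, ∀ p ∈ H, ∀ q ∈ H, p < q → f p q = k := by
  let I := (ℵ₁ : Cardinal.{u}).ord.ToType
  have hI : #I = ℵ₁ := by simp [I]
  by_cases hreach : ∀ a : W, ∃ γ : I, branch f a γ = a
  · have hbound : (sum fun γ : I => #(Iio γ → κ)) ≤ 𝔠 :=
      calc _ ≤ lift.{v} #I * ⨆ γ : I, #(Iio γ → κ) := sum_le_lift_mk_mul_iSup _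
        _ ≤ ℵ₁ * 𝔠 := by
          rw [hI, lift_aleph, Ordinal.lift_one]
          gcongr
          refine ciSup_le' fun γ => ?_
          have : Countable (Iio γ) := le_aleph0_iff_set_countable.1 <|
            lt_aleph_one_iff.1 <| by simpa [hI] using mk_Iio_lt γ (by simp [I])
          exact mk_arrow_le_continuum
        _ = 𝔠 :=
          Cardinal.mul_eq_right aleph0_le_continuum aleph_one_le_continuum (aleph_pos 1).ne'
    refine absurd hW (not_lt.2 (lift_le.{v}.1 ?_))
    rw [lift_continuum]
    exact (lift_mk_le_sum_of_forall_reached hreach).trans hbound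
  · push Not at hreach
    obtain ⟨a, ha⟩ := hreach
    have : Uncountable I := aleph0_lt_mk_iff.1 (hI ▸ aleph0_lt_aleph_one)
    exact exists_uncountable_homogeneous_of_strictMono (strictMono_branch ha) _
      fun δ γ => color_branch_branch ha

section Topology

variable {X : Type u} [TopologicalSpace X]

theorem IsLocalPiBase.nonempty {p : X} {𝓑 : Set (Set X)} (h : IsLocalPiBase p 𝓑) :
    𝓑.Nonempty :=
  let ⟨b, hb, _⟩ := h.2 univ isOpen_univ (mem_univ p)
  ⟨b, hb⟩

theorem IsLocalPiBase.exists_disjoint_of_ne [T2Space X] {p q : X} {𝓑 𝓒 : Set (Set X)}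
    (h𝓑 : IsLocalPiBase p 𝓑) (h𝓒 : IsLocalPiBase q 𝓒) (hpq : p ≠ q) :
    ∃ b ∈ 𝓑, ∃ c ∈ 𝓒, Disjoint b c := by
  obtain ⟨U, V, hU, hV, hpU, hqV, hUV⟩ := t2_separation hpq
  obtain ⟨b, hb, hbU⟩ := h𝓑.2 U hU hpU
  obtain ⟨c, hc, hcV⟩ := h𝓒.2 V hV hqV
  exact ⟨b, hb, c, hc, hUV.mono hbU hcV⟩

variable (hc : ∀ 𝓒 : Set (Set X), IsCellular 𝓒 → 𝓒.Countable)
include hc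

theorem countable_of_pairwise_disjoint_isOpen {ι : Type*} {g : ι → Set X} {H : Set ι}
    (hg : ∀ i ∈ H, IsOpen (g i) ∧ (g i).Nonempty) (hH : H.PairwiseDisjoint g) :
    H.Countable := by
  have hinj : InjOn g H := fun i hi j hj hij => by_contra fun hne =>
    (hg j hj).2.ne_empty <| disjoint_self.1 <| by
      simpa [Function.onFun, hij] using hH hi hj hne
  refine countable_of_injective_of_countable_image hinj (hc _ ⟨?_, ?_⟩)
  · rintro _ ⟨i, hi, rfl⟩
    exact hg i hi
  · rintro _ ⟨i, hi, rfl⟩ _ ⟨j, hj, rfl⟩ hne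
    exact hH hi hj fun hij => hne (congrArg g hij)

theorem countable_of_disjoint_of_lt {ι : Type*} [LinearOrder ι] {u v : ι → Set X} {H : Set ι}
    (hu : ∀ i ∈ H, IsOpen (u i)) (hv : ∀ i ∈ H, IsOpen (v i))
    (huv : ∀ i ∈ H, (u i ∩ v i).Nonempty)
    (hH : ∀ i ∈ H, ∀ j ∈ H, i < j → Disjoint (u i) (v j)) : H.Countable := by
  refine countable_of_pairwise_disjoint_isOpen hc (g := fun i => u i ∩ v i)
    (fun i hi => ⟨(hu i hi).inter (hv i hi), huv i hi⟩) fun i hi j hj hij => ?_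
  rcases hij.lt_or_gt with hlt | hlt
  · exact (hH i hi j hj hlt).mono inter_subset_left inter_subset_right
  · exact (hH j hj i hi hlt).symm.mono inter_subset_right inter_subset_left

end Topology

/-- a ccc Hausdorff space in which every point has a countable linked
local π-base has cardinality at most 𝔠 = 2^ℵ₀. -/
theorem card_le_continuum_of_ccc_and_countable_linked
    {X : Type u} [TopologicalSpace X] [T2Space X]
    (hc : ∀ 𝓒 : Set (Set X), IsCellular 𝓒 → 𝓒.Countable)
    (hπ : ∀ p : X, ∃ 𝓑 : Set (Set X), 𝓑.Countable ∧ IsLocalPiBase p 𝓑 ∧ Linked 𝓑) :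
    #X ≤ 2 ^ ℵ₀ := by
  by_contra! hX
  rw [two_power_aleph0] at hX
  have hseq (p : X) : ∃ b : ℕ → Set X, IsLocalPiBase p (range b) ∧ Linked (range b) := by
    obtain ⟨𝓑, hcount, hbase, hlinked⟩ := hπ p
    obtain ⟨b, rfl⟩ := hcount.exists_eq_range hbase.nonempty
    exact ⟨b, hbase, hlinked⟩
  choose b hbase hlinked using hseq
  have hsep (p q : X) : ∃ mn : ℕ × ℕ, p ≠ q → Disjoint (b p mn.1) (b q mn.2) := by
    by_cases hpq : p = q
    · exact ⟨0, fun hne => (hne hpq).elim⟩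
    obtain ⟨_, ⟨m, rfl⟩, _, ⟨n, rfl⟩, hmn⟩ := (hbase p).exists_disjoint_of_ne (hbase q) hpq
    exact ⟨(m, n), fun _ => hmn⟩
  choose color hcolor using hsep
  obtain ⟨_, _⟩ := exists_wellFoundedLT X
  obtain ⟨H, hH, ⟨m, n⟩, hmn⟩ := exists_uncountable_homogeneous_of_continuum_lt_mk hX color
  have hopen (k : ℕ) (p : X) (_ : p ∈ H) : IsOpen (b p k) :=
    ((hbase p).1 _ (mem_range_self k)).1
  refine hH (countable_of_disjoint_of_lt hc (hopen m) (hopen n)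
    (fun p _ => hlinked p _ (mem_range_self m) _ (mem_range_self n)) fun p hp q hq hpq => ?_)
  simpa [hmn p hp q hq hpq] using hcolor p q hpq.ne
end

section
/- If X is a compact Hausdorff space, κ an infinite cardinal, every cellular family in X has cardinality at most κ, and every point p of X admits a weak closed pseudobase with the finite intersection property of cardinality at most κ, then |X| ≤ 2^κ. -/
open Set Topology Cardinal

universe u

/-
By compactness, the finite intersections of a centered weak closed pseudobase at `p` form a
directed family of nonempty open sets whose closures converge to `p`; indexing them by the
finite subsets of a set of size `κ` gives all points such families over a common index set.

If `X` had no dense subset of size `≤ 2^κ`, there would be a left-separated sequence of length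
`(2^κ)⁺`; colouring its pairs by indices of members that separate them, the Erdős–Rado theorem
yields `κ⁺` points carrying pairwise disjoint members, contradicting the cellularity bound.

So there is a dense set `D` of size `≤ 2^κ`, and the members of the families at points of `D`
form a π-base of size `≤ 2^κ`. By cellularity the closure of every open set is the closure of
the union of at most `κ` members of this π-base, so there are at most `2^κ` such closures, and
a point is determined by the `κ` closures of the members of its family.
-/

namespace Cardinal

variable {κ : Cardinal.{u}}

theorem mk_iUnion_le_of_forall_le {α ι : Type u} {μ : Cardinal.{u}} (hμ : ℵ₀ ≤ μ)
    {f : ι → Set α} (hι : #ι ≤ μ) (hf : ∀ i, #(f i) ≤ μ) : #(⋃ i, f i) ≤ μ :=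
  (mk_iUnion_le f).trans (mul_le_of_le hμ hι (ciSup_le' hf))

theorem aleph0_le_two_power (hκ : ℵ₀ ≤ κ) : ℵ₀ ≤ 2 ^ κ :=
  hκ.trans (cantor κ).le

theorem power_le_two_power {a b : Cardinal.{u}} (hκ : ℵ₀ ≤ κ) (ha : a ≤ 2 ^ κ) (hb : b ≤ κ) :
    a ^ b ≤ 2 ^ κ :=
  calc a ^ b ≤ (2 ^ κ) ^ κ :=
        (power_le_power_right ha).trans (power_le_power_left (power_ne_zero _ two_ne_zero) hb)
    _ = 2 ^ κ := by rw [← power_mul, mul_eq_self hκ]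

theorem mk_prod_self_le {C : Type u} (hκ : ℵ₀ ≤ κ) (hC : #C ≤ κ) : #(C × C) ≤ κ := by
  simpa using mul_le_of_le hκ hC hC

theorem mk_Iio_toType_ord_succ_le (γ : (Order.succ κ).ord.ToType) : #(Iio γ) ≤ κ :=
  Order.lt_succ_iff.1 (by simpa using mk_Iio_lt γ (by simp))

theorem exists_forall_gt_of_mk_le (hκ : ℵ₀ ≤ κ) {S : Set (Order.succ κ).ord.ToType}
    (hS : #S ≤ κ) : ∃ γ, ∀ b ∈ S, b < γ := by
  have hS_lt : #S < Order.cof (Order.succ κ).ord.ToType := by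
    rw [Ordinal.cof_toType, (isRegular_succ hκ).cof_ord]
    exact hS.trans_lt (Order.lt_succ κ)
  have : ¬IsCofinal S := fun h => (Order.cof_le h).not_gt hS_lt
  simpa [IsCofinal] using this

end Cardinal

section TransfiniteRec

variable {ι α : Type*} [Preorder ι] [WellFoundedLT ι]

noncomputable def transfiniteRec (f : Set α → α) : ι → α :=
  wellFounded_lt.fix fun i x => f (range fun j : Iio i => x j j.2)

theorem transfiniteRec_eq (f : Set α → α) (i : ι) :
    transfiniteRec f i = f (transfiniteRec f '' Iio i) := by
  rw [transfiniteRec, WellFounded.fix_eq, image_eq_range]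

end TransfiniteRec

section ErdosRado

variable {A C : Type u} {κ : Cardinal.{u}}

theorem exists_closedUnder_mk_le_two_power (hκ : ℵ₀ ≤ κ) (w : Set A → Set A)
    (hw : ∀ s : Set A, #s ≤ κ → #(w s) ≤ 2 ^ κ) :
    ∃ M : Set A, #M ≤ 2 ^ κ ∧ ∀ s ⊆ M, #s ≤ κ → w s ⊆ M := by
  -- `M` is the union of `κ⁺` stages; since `κ⁺` is regular, a subset of `M` of size `≤ κ`
  -- lies below some stage, which then contains its image under `w`.
  obtain ⟨stage, hstage⟩ : ∃ stage : (Order.succ κ).ord.ToType → Set A,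
      ∀ γ, stage γ = ⋃ s : {s // s ⊆ ⋃₀ (stage '' Iio γ) ∧ #s ≤ κ}, w s :=
    ⟨transfiniteRec fun 𝒮 => ⋃ s : {s // s ⊆ ⋃₀ 𝒮 ∧ #s ≤ κ}, w s, transfiniteRec_eq _⟩
  have hκ2 := aleph0_le_two_power hκ
  have card_stage (γ) : #(stage γ) ≤ 2 ^ κ := by
    induction γ using WellFoundedLT.induction with
    | _ γ ih =>
      rw [hstage, sUnion_image]
      have hprev : #(⋃ β : Iio γ, stage β) ≤ 2 ^ κ :=
        mk_iUnion_le_of_forall_le hκ2 ((mk_Iio_toType_ord_succ_le γ).trans (cantor κ).le)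
          fun β => ih β β.2
      refine mk_iUnion_le_of_forall_le hκ2 ?_ fun s => hw s s.2.2
      exact (mk_bounded_subset_le _ κ).trans
        (power_le_two_power hκ (max_le (by simpa using hprev) hκ2) le_rfl)
  refine ⟨⋃ γ, stage γ, mk_iUnion_le_of_forall_le hκ2 ?_ card_stage, fun s hs hsκ => ?_⟩
  · rw [mk_toType, card_ord]
    exact Order.succ_le_of_lt (cantor κ)
  choose γ hγ using fun a : s => mem_iUnion.1 (hs a.2)
  obtain ⟨δ, hδ⟩ := exists_forall_gt_of_mk_le hκ (mk_range_le.trans hsκ)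
  have hsδ : s ⊆ ⋃₀ (stage '' Iio δ) := fun a ha =>
    ⟨stage (γ ⟨a, ha⟩), mem_image_of_mem _ (hδ _ (mem_range_self _)), hγ ⟨a, ha⟩⟩
  refine subset_iUnion_of_subset δ ?_
  rw [hstage]
  exact subset_iUnion_of_subset ⟨s, hsδ, hsκ⟩ subset_rfl

theorem exists_realizing_mk_le_two_power (hκ : ℵ₀ ≤ κ) (hC : #C ≤ κ) (F : A → A → C) :
    ∃ M : Set A, #M ≤ 2 ^ κ ∧ ∀ s ⊆ M, #s ≤ κ → ∀ z ∉ s,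
      ∃ y ∈ M, y ∉ s ∧ ∀ b ∈ s, F b y = F b z ∧ F y b = F z b := by
  let type (s : Set A) (x : A) : s → C × C := fun b => (F b x, F x b)
  have realizers (s : Set A) :
      ∃ R ⊆ sᶜ, #R ≤ #(s → C × C) ∧ type s '' R = type s '' sᶜ := by
    obtain ⟨R, hRs, hR⟩ := exists_subset_bijOn sᶜ (type s)
    exact ⟨R, hRs, (mk_image_eq_of_injOn _ _ hR.injOn).symm.le.trans (mk_set_le _),
      hR.image_eq⟩
  choose R hRs hRcard hR using realizers
  have hRκ (s : Set A) (hs : #s ≤ κ) : #(R s) ≤ 2 ^ κ := by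
    refine (hRcard s).trans ?_
    rw [← power_def]
    exact power_le_two_power hκ ((mk_prod_self_le hκ hC).trans (cantor κ).le) hs
  obtain ⟨M, hMcard, hM⟩ := exists_closedUnder_mk_le_two_power hκ R hRκ
  refine ⟨M, hMcard, fun s hsM hs z hz => ?_⟩
  obtain ⟨y, hy, hyz⟩ := (hR s).ge (mem_image_of_mem _ hz)
  exact ⟨y, hM s hsM hs hy, hRs s hy, fun b hb => Prod.ext_iff.1 (congrFun hyz ⟨b, hb⟩)⟩

theorem exists_seq_of_realizing {F : A → A → C} {M : Set A}
    (hM : ∀ s ⊆ M, #s ≤ κ → ∀ z ∉ s,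
      ∃ y ∈ M, y ∉ s ∧ ∀ b ∈ s, F b y = F b z ∧ F y b = F z b)
    {z : A} (hz : z ∉ M) :
    ∃ x : (Order.succ κ).ord.ToType → A, Function.Injective x ∧
      ∀ η ξ, η < ξ → F (x η) (x ξ) = F (x η) z ∧ F (x ξ) (x η) = F z (x η) := by
  have step (s : Set A) : ∃ y, s ⊆ M → #s ≤ κ →
      y ∈ M ∧ y ∉ s ∧ ∀ b ∈ s, F b y = F b z ∧ F y b = F z b := by
    by_cases h : s ⊆ M ∧ #s ≤ κ
    · obtain ⟨y, hy⟩ := hM s h.1 h.2 z fun hzs => hz (h.1 hzs)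
      exact ⟨y, fun _ _ => hy⟩
    · exact ⟨z, fun h₁ h₂ => (h ⟨h₁, h₂⟩).elim⟩
  choose r hr using step
  obtain ⟨x, hx⟩ : ∃ x : (Order.succ κ).ord.ToType → A, ∀ ξ, x ξ = r (x '' Iio ξ) :=
    ⟨transfiniteRec r, transfiniteRec_eq r⟩
  have hsmall (ξ) : #(x '' Iio ξ) ≤ κ := mk_image_le.trans (mk_Iio_toType_ord_succ_le ξ)
  have hxM (ξ) : x ξ ∈ M := by
    induction ξ using WellFoundedLT.induction with
    | _ ξ ih =>
      rw [hx]
      exact (hr _ (by rintro _ ⟨η, hη, rfl⟩; exact ih η hη) (hsmall ξ)).1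
  have hrx (ξ) : x ξ ∉ x '' Iio ξ ∧
      ∀ b ∈ x '' Iio ξ, F b (x ξ) = F b z ∧ F (x ξ) b = F z b := by
    rw [hx ξ]
    exact (hr _ (by rintro _ ⟨η, -, rfl⟩; exact hxM η) (hsmall ξ)).2
  exact ⟨x, Function.Injective.of_lt_imp_ne fun η ξ h he => (hrx ξ).1 ⟨η, h, he⟩,
    fun η ξ h => (hrx ξ).2 _ (mem_image_of_mem _ h)⟩

theorem erdos_rado (hκ : ℵ₀ ≤ κ) (hA : Order.succ (2 ^ κ) ≤ #A) (hC : #C ≤ κ)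
    (F : A → A → C) :
    ∃ Y : Set A, κ < #Y ∧ ∃ c c', ∀ u ∈ Y, ∀ v ∈ Y, u ≠ v → F u v = c ∨ F u v = c' := by
  obtain ⟨M, hMcard, hM⟩ := exists_realizing_mk_le_two_power hκ hC F
  obtain ⟨z, hz⟩ : ∃ z, z ∉ M := by
    refine (ne_univ_iff_exists_notMem M).1 fun h => ?_
    rw [h, mk_univ] at hMcard
    exact (Order.lt_succ (2 ^ κ)).not_ge (hA.trans hMcard)
  obtain ⟨x, hx_inj, hx⟩ := exists_seq_of_realizing hM hz
  -- the colours of a pair of terms of `x` are determined by its earlier term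
  let G η := (F (x η) z, F z (x η))
  have hG : #(C × C) < (Order.succ κ).ord.cof := by
    rw [(isRegular_succ hκ).cof_ord]
    exact (mk_prod_self_le hκ hC).trans_lt (Order.lt_succ κ)
  obtain ⟨c, hc⟩ := infinite_pigeonhole_card G (Order.succ κ) (by simp)
    (hκ.trans (Order.le_succ κ)) hG
  refine ⟨x '' (G ⁻¹' {c}), ?_, c.1, c.2, ?_⟩
  · rw [mk_image_eq hx_inj]
    exact (Order.lt_succ κ).trans_le hc
  · rintro _ ⟨η, hη, rfl⟩ _ ⟨ξ, hξ, rfl⟩ hne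
    rcases lt_or_gt_of_ne (hx_inj.ne_iff.1 hne) with h | h
    · exact .inl ((hx η ξ h).1.trans (congrArg Prod.fst hη))
    · exact .inr ((hx ξ η h).2.trans (congrArg Prod.snd hξ))

end ErdosRado

section Topology

variable {X : Type u} [TopologicalSpace X] {κ : Cardinal.{u}}

def IsPiBase (𝓟 : Set (Set X)) : Prop :=
  (∀ P ∈ 𝓟, IsOpen P ∧ P.Nonempty) ∧ ∀ U : Set X, IsOpen U → U.Nonempty → ∃ P ∈ 𝓟, P ⊆ U

theorem mk_le_of_pairwiseDisjoint (hc : ∀ 𝓒 : Set (Set X), IsCellular 𝓒 → #𝓒 ≤ κ)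
    {ι : Type u} {Y : Set ι} {d : ι → Set X} (hd : ∀ i ∈ Y, IsOpen (d i) ∧ (d i).Nonempty)
    (hY : Y.PairwiseDisjoint d) : #Y ≤ κ := by
  have hinj : InjOn d Y := fun i hi j hj hij =>
    hY.elim_set hi hj _ (hd i hi).2.some_mem (hij ▸ (hd i hi).2.some_mem)
  rw [← mk_image_eq_of_injOn _ _ hinj]
  refine hc _ ⟨?_, hinj.pairwiseDisjoint_image.2 hY⟩
  rintro _ ⟨i, hi, rfl⟩
  exact hd i hi

theorem exists_subset_mk_le_sUnion_subset_closure
    (hc : ∀ 𝓒 : Set (Set X), IsCellular 𝓒 → #𝓒 ≤ κ) {𝓐 : Set (Set X)}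
    (h𝓐 : ∀ A ∈ 𝓐, IsOpen A) : ∃ 𝓑 ⊆ 𝓐, #𝓑 ≤ κ ∧ ⋃₀ 𝓐 ⊆ closure (⋃₀ 𝓑) := by
  let 𝓓 : Set (Set X) := {V | IsOpen V ∧ V.Nonempty ∧ ∃ A ∈ 𝓐, V ⊆ A}
  obtain ⟨𝓒, h𝓒⟩ := zorn_subset {𝓒 | 𝓒 ⊆ 𝓓 ∧ 𝓒.PairwiseDisjoint id} fun 𝓢 h𝓢 hchain =>
    ⟨⋃₀ 𝓢, ⟨sUnion_subset fun _ h => (h𝓢 h).1,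
      (hchain.pairwiseDisjoint_sUnion id).2 fun _ h => (h𝓢 h).2⟩, fun _ => subset_sUnion_of_mem⟩
  obtain ⟨h𝓒𝓓, h𝓒disj⟩ := h𝓒.prop
  have h𝓒κ : #𝓒 ≤ κ := hc 𝓒 ⟨fun c hc => ⟨(h𝓒𝓓 hc).1, (h𝓒𝓓 hc).2.1⟩, h𝓒disj⟩
  choose A hA𝓐 hcA using fun c : 𝓒 => (h𝓒𝓓 c.2).2.2
  refine ⟨range A, range_subset_iff.2 hA𝓐, mk_range_le.trans h𝓒κ, ?_⟩
  have hdense : ⋃₀ 𝓐 ⊆ closure (⋃₀ 𝓒) := by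
    rintro x ⟨B, hB, hxB⟩
    refine mem_closure_iff.2 fun U hU hxU => not_disjoint_iff_nonempty_inter.1 fun hdisj => ?_
    have hins : insert (U ∩ B) 𝓒 ⊆ 𝓓 ∧ (insert (U ∩ B) 𝓒).PairwiseDisjoint id :=
      ⟨insert_subset ⟨hU.inter (h𝓐 B hB), ⟨x, hxU, hxB⟩, B, hB, inter_subset_right⟩ h𝓒𝓓,
        h𝓒disj.insert fun c hc _ => hdisj.mono inter_subset_left (subset_sUnion_of_mem hc)⟩
    have hUB : U ∩ B ∈ 𝓒 := h𝓒.2 hins (subset_insert _ _) (mem_insert _ _)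
    exact disjoint_left.1 hdisj hxU (subset_sUnion_of_mem hUB ⟨hxU, hxB⟩)
  refine hdense.trans (closure_mono (sUnion_subset fun c hc => ?_))
  exact (hcA ⟨c, hc⟩).trans (subset_sUnion_of_mem (mem_range_self _))

theorem IsPiBase.subset_closure_sUnion {𝓟 : Set (Set X)} (h𝓟 : IsPiBase 𝓟) {U : Set X}
    (hU : IsOpen U) : U ⊆ closure (⋃₀ {P ∈ 𝓟 | P ⊆ U}) := by
  intro x hx
  refine mem_closure_iff.2 fun V hV hxV => ?_
  obtain ⟨P, hP, hPVU⟩ := h𝓟.2 (V ∩ U) (hV.inter hU) ⟨x, hxV, hx⟩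
  obtain ⟨y, hy⟩ := (h𝓟.1 P hP).2
  exact ⟨y, (hPVU hy).1, P, ⟨hP, hPVU.trans inter_subset_right⟩, hy⟩

theorem IsPiBase.mk_closure_image_isOpen_le
    (hc : ∀ 𝓒 : Set (Set X), IsCellular 𝓒 → #𝓒 ≤ κ) {𝓟 : Set (Set X)} (h𝓟 : IsPiBase 𝓟) :
    #(closure '' {U : Set X | IsOpen U}) ≤ max #𝓟 ℵ₀ ^ κ := by
  have hsub : closure '' {U : Set X | IsOpen U} ⊆
      range fun 𝓑 : {𝓑 // 𝓑 ⊆ 𝓟 ∧ #𝓑 ≤ κ} => closure (⋃₀ 𝓑.1) := by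
    rintro _ ⟨U, hU, rfl⟩
    obtain ⟨𝓑, h𝓑, h𝓑κ, hdense⟩ :=
      exists_subset_mk_le_sUnion_subset_closure hc (𝓐 := {P ∈ 𝓟 | P ⊆ U})
        fun P hP => (h𝓟.1 P hP.1).1
    refine ⟨⟨𝓑, fun P hP => (h𝓑 hP).1, h𝓑κ⟩,
      (closure_mono (sUnion_subset fun P hP => (h𝓑 hP).2)).antisymm ?_⟩
    exact closure_minimal ((h𝓟.subset_closure_sUnion hU).trans
      (closure_minimal hdense isClosed_closure)) isClosed_closure
  exact (mk_le_mk_of_subset hsub).trans (mk_range_le.trans (mk_bounded_subset_le _ _))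

theorem exists_seq_notMem_closure {μ : Cardinal.{u}} (h : ∀ D : Set X, Dense D → μ < #D) :
    ∃ x : (Order.succ μ).ord.ToType → X, ∀ α, x α ∉ closure (x '' Iio α) := by
  have avoid (s : Set X) (hs : #s ≤ μ) : ∃ y, y ∉ closure s := by
    by_contra! hall
    exact (h s hall).not_ge hs
  obtain ⟨y₀, -⟩ := avoid ∅ (by simp)
  have step (s : Set X) : ∃ y, #s ≤ μ → y ∉ closure s := by
    by_cases hs : #s ≤ μ
    · exact (avoid s hs).imp fun _ hy _ => hy
    · exact ⟨y₀, fun h' => (hs h').elim⟩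
  choose r hr using step
  refine ⟨transfiniteRec r, fun α => ?_⟩
  rw [transfiniteRec_eq]
  exact hr _ (mk_image_le.trans (mk_Iio_toType_ord_succ_le α))

structure IsShrinkingFamily {ι : Type*} [Preorder ι] (E : X → ι → Set X) : Prop where
  isOpen : ∀ p i, IsOpen (E p i)
  nonempty : ∀ p i, (E p i).Nonempty
  antitone : ∀ p, Antitone (E p)
  exists_closure_subset : ∀ p, ∀ U ∈ 𝓝 p, ∃ i, closure (E p i) ⊆ U
  iInter_closure : ∀ p, ⋂ i, closure (E p i) = {p}

namespace IsShrinkingFamily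

theorem injective_closure {ι : Type*} [Preorder ι] {E : X → ι → Set X}
    (hE : IsShrinkingFamily E) : Function.Injective fun p i => closure (E p i) := by
  intro p q h
  simpa [hE.iInter_closure] using congrArg (fun f : ι → Set X => ⋂ i, f i) h

theorem isPiBase {ι : Type*} [Preorder ι] {E : X → ι → Set X} (hE : IsShrinkingFamily E)
    {D : Set X} (hD : Dense D) : IsPiBase (⋃ d ∈ D, range (E d)) := by
  refine ⟨?_, fun U hU hUne => ?_⟩
  · simp only [mem_iUnion, mem_range]
    rintro _ ⟨d, -, i, rfl⟩
    exact ⟨hE.isOpen d i, hE.nonempty d i⟩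
  · obtain ⟨d, hdU, hdD⟩ := hD.inter_open_nonempty U hU hUne
    obtain ⟨i, hi⟩ := hE.exists_closure_subset d U (hU.mem_nhds hdU)
    exact ⟨E d i, mem_biUnion hdD (mem_range_self i), subset_closure.trans hi⟩

theorem exists_dense_mk_le_two_power {ι : Type u} [SemilatticeSup ι] {E : X → ι → Set X}
    (hκ : ℵ₀ ≤ κ) (hc : ∀ 𝓒 : Set (Set X), IsCellular 𝓒 → #𝓒 ≤ κ)
    (hE : IsShrinkingFamily E) (hι : #ι ≤ κ) : ∃ D : Set X, Dense D ∧ #D ≤ 2 ^ κ := by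
  by_contra! hD
  obtain ⟨x, hx⟩ := exists_seq_notMem_closure hD
  choose b hb using fun α =>
    hE.exists_closure_subset (x α) _ (isClosed_closure.isOpen_compl.mem_nhds (hx α))
  have hsep (β α) :
      ∃ t, β < α → Disjoint (closure (E (x β) t)) (closure (E (x α) (b α))) := by
    by_cases hβα : β < α
    · have hxβ : x β ∉ closure (E (x α) (b α)) := fun h =>
        hb α h (subset_closure (mem_image_of_mem x hβα))
      obtain ⟨t, ht⟩ :=
        hE.exists_closure_subset _ _ (isClosed_closure.isOpen_compl.mem_nhds hxβ)
      exact ⟨t, fun _ => subset_compl_iff_disjoint_right.1 ht⟩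
    · exact ⟨b α, fun h => (hβα h).elim⟩
  choose F hF using hsep
  obtain ⟨Y, hYκ, c, c', hY⟩ := erdos_rado hκ (by simp) hι F
  let d α := E (x α) (b α ⊔ c ⊔ c')
  have hdisj (β) (hβ : β ∈ Y) (α) (hα : α ∈ Y) (hβα : β < α) : Disjoint (d β) (d α) := by
    have hle : F β α ≤ b β ⊔ c ⊔ c' := by
      rcases hY β hβ α hα hβα.ne with h | h <;> rw [h]
      exacts [le_sup_right.trans le_sup_left, le_sup_right]
    exact (hF β α hβα).mono ((hE.antitone _ hle).trans subset_closure)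
      ((hE.antitone _ (le_sup_left.trans le_sup_left)).trans subset_closure)
  have hYdisj : Y.PairwiseDisjoint d := fun β hβ α hα hne =>
    (lt_or_gt_of_ne hne).elim (hdisj β hβ α hα) fun h => (hdisj α hα β hβ h).symm
  exact hYκ.not_ge (mk_le_of_pairwiseDisjoint hc
    (fun α _ => ⟨hE.isOpen _ _, hE.nonempty _ _⟩) hYdisj)

theorem mk_le_two_power_of_dense {ι : Type u} [Preorder ι] {E : X → ι → Set X}
    (hκ : ℵ₀ ≤ κ) (hc : ∀ 𝓒 : Set (Set X), IsCellular 𝓒 → #𝓒 ≤ κ)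
    (hE : IsShrinkingFamily E) (hι : #ι ≤ κ) {D : Set X} (hD : Dense D)
    (hDκ : #D ≤ 2 ^ κ) : #X ≤ 2 ^ κ := by
  have hκ2 := aleph0_le_two_power hκ
  have h𝓟 : #(⋃ d ∈ D, range (E d)) ≤ 2 ^ κ := by
    rw [biUnion_eq_iUnion]
    exact mk_iUnion_le_of_forall_le hκ2 hDκ fun d => mk_range_le.trans (hι.trans (cantor κ).le)
  have hclosures : #(closure '' {U : Set X | IsOpen U}) ≤ 2 ^ κ :=
    ((hE.isPiBase hD).mk_closure_image_isOpen_le hc).trans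
      (power_le_two_power hκ (max_le h𝓟 hκ2) le_rfl)
  let code (p : X) (i : ι) : closure '' {U : Set X | IsOpen U} :=
    ⟨closure (E p i), E p i, hE.isOpen p i, rfl⟩
  have hcode : Function.Injective code := fun p q h =>
    hE.injective_closure (funext fun i => congrArg Subtype.val (congrFun h i))
  calc #X ≤ #(ι → closure '' {U : Set X | IsOpen U}) := mk_le_of_injective hcode
    _ = #(closure '' {U : Set X | IsOpen U}) ^ #ι := (power_def _ _).symm
    _ ≤ 2 ^ κ := power_le_two_power hκ hclosures hι

end IsShrinkingFamily

theorem isShrinkingFamily_biInter [CompactSpace X] {K : Type*} {g : X → K → Set X}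
    (hopen : ∀ p j, IsOpen (g p j)) (hcent : ∀ p (t : Finset K), (⋂ j ∈ t, g p j).Nonempty)
    (hpseudo : ∀ p, ⋂ j, closure (g p j) = {p}) :
    IsShrinkingFamily fun p (t : Finset K) => ⋂ j ∈ t, g p j := by
  classical
  have hanti (p) : Antitone fun t : Finset K => ⋂ j ∈ t, g p j :=
    fun _ _ hst => biInter_subset_biInter_left hst
  have hdir (p) : Directed (· ⊇ ·) fun t : Finset K => closure (⋂ j ∈ t, g p j) := fun s t =>
    ⟨s ∪ t, closure_mono (hanti p Finset.subset_union_left),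
      closure_mono (hanti p Finset.subset_union_right)⟩
  have hinter (p) : ⋂ t : Finset K, closure (⋂ j ∈ t, g p j) = {p} := by
    refine (Nonempty.subset_singleton_iff ?_).1 ?_
    · exact IsCompact.nonempty_iInter_of_directed_nonempty_isCompact_isClosed _ (hdir p)
        (fun t => (hcent p t).closure) (fun _ => isClosed_closure.isCompact)
        fun _ => isClosed_closure
    · rw [← hpseudo p]
      exact subset_iInter fun j => iInter_subset_of_subset {j} (by simp)
  refine ⟨fun p t => isOpen_biInter_finset fun j _ => hopen p j, hcent, hanti,
    fun p U hU => ?_, hinter⟩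
  refine exists_subset_nhds_of_isCompact' (hdir p) (fun _ => isClosed_closure.isCompact)
    (fun _ => isClosed_closure) fun x hx => ?_
  rw [hinter p, mem_singleton_iff] at hx
  exact hx ▸ hU

theorem IsWeakClosedPseudobase.exists_indexed {p : X} {𝓑 : Set (Set X)}
    (h𝓑 : IsWeakClosedPseudobase p 𝓑) (hcent : Centered 𝓑) {K : Type u} (hK : #𝓑 ≤ #K) :
    ∃ g : K → Set X, (∀ j, IsOpen (g j)) ∧ (∀ t : Finset K, (⋂ j ∈ t, g j).Nonempty) ∧
      ⋂ j, closure (g j) = {p} := by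
  -- indices outside the range of `e` get `univ`, which changes neither
  -- the finite intersections nor the intersection of the closures
  obtain ⟨e⟩ := hK
  let g := Function.extend e Subtype.val fun _ => Set.univ
  have hg (j) : (∃ b : 𝓑, e b = j ∧ g j = b) ∨ g j = Set.univ := by
    by_cases h : ∃ b, e b = j
    · obtain ⟨b, rfl⟩ := h
      exact .inl ⟨b, rfl, e.injective.extend_apply _ _ b⟩
    · exact .inr (Function.extend_apply' _ _ _ h)
  refine ⟨g, fun j => ?_, fun t => ?_, ?_⟩
  · rcases hg j with ⟨b, -, hb⟩ | h
    · exact hb ▸ h𝓑.1 b b.2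
    · exact h ▸ isOpen_univ
  · let F : Finset (Set X) := (t.preimage e e.injective.injOn).image Subtype.val
    have hF : (⋂₀ (F : Set (Set X))).Nonempty := by
      rcases F.eq_empty_or_nonempty with hF | hF
      · simpa [hF] using ⟨p, mem_univ p⟩
      · exact hcent F hF (by simp [F])
    refine hF.mono fun x hx => mem_iInter₂.2 fun j hj => ?_
    rcases hg j with ⟨b, rfl, hb⟩ | h
    · exact hb ▸ hx b (by simp [F, hj])
    · exact h ▸ mem_univ x
  · rw [← h𝓑.2]
    refine subset_antisymm (subset_iInter₂ fun b hb => iInter_subset_of_subset (e ⟨b, hb⟩) ?_)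
      (subset_iInter fun j => ?_)
    · rw [show g (e ⟨b, hb⟩) = b from e.injective.extend_apply _ _ _]
    · rcases hg j with ⟨b, rfl, hb⟩ | h
      · exact hb ▸ biInter_subset_of_mem b.2
      · simp [h]

end Topology

theorem compact_card_le_two_pow_of_cellular_and_wPsiCF_general
    {X : Type u} [TopologicalSpace X] [CompactSpace X]
    (κ : Cardinal.{u}) (hκ : ℵ₀ ≤ κ)
    (hc : ∀ 𝓒 : Set (Set X), IsCellular 𝓒 → #𝓒 ≤ κ)
    (hw : ∀ p : X, ∃ 𝓑 : Set (Set X),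
      IsWeakClosedPseudobase p 𝓑 ∧ Centered 𝓑 ∧ #𝓑 ≤ κ) :
    #X ≤ 2 ^ κ := by
  classical
  have hK : #κ.out = κ := mk_out κ
  have : Infinite κ.out := infinite_iff.2 (hK.symm ▸ hκ)
  have hι : #(Finset κ.out) ≤ κ := by rw [mk_finset_of_infinite, hK]
  choose g hg_open hg_cent hg_pseudo using fun p =>
    let ⟨_, h𝓑, hcent, hcard⟩ := hw p
    h𝓑.exists_indexed hcent (hcard.trans hK.ge)
  have hE := isShrinkingFamily_biInter hg_open hg_cent hg_pseudo
  obtain ⟨D, hD, hDκ⟩ := hE.exists_dense_mk_le_two_power hκ hc hι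
  exact hE.mk_le_two_power_of_dense hκ hc hι hD hDκ

/-- a compact Hausdorff space with cellularity ≤ κ in which every
point has a weak closed pseudobase with the finite intersection property of
cardinality ≤ κ has cardinality at most 2^κ. -/
theorem compact_card_le_two_pow_of_cellular_and_wPsiCF
    {X : Type u} [TopologicalSpace X] [CompactSpace X] [T2Space X]
    (κ : Cardinal.{u}) (hκ : ℵ₀ ≤ κ)
    (hc : ∀ 𝓒 : Set (Set X), IsCellular 𝓒 → #𝓒 ≤ κ)
    (hw : ∀ p : X, ∃ 𝓑 : Set (Set X),
      IsWeakClosedPseudobase p 𝓑 ∧ Centered 𝓑 ∧ #𝓑 ≤ κ) :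
    #X ≤ 2 ^ κ :=
  compact_card_le_two_pow_of_cellular_and_wPsiCF_general κ hκ hc hw
end

section
/- Let X be a Tychonoff (completely regular Hausdorff) space. If every discrete family of nonempty open subsets of X is finite, then every locally finite family of nonempty open subsets of X is finite. -/
open Set Topology Cardinal

universe u

/-- A family of sets is locally finite if every point has an open neighborhood
meeting only finitely many members. -/
def LocFinFamily {X : Type u} [TopologicalSpace X] (𝓒 : Set (Set X)) : Prop :=
  ∀ x : X, ∃ U : Set X, IsOpen U ∧ x ∈ U ∧ {c ∈ 𝓒 | (c ∩ U).Nonempty}.Finite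

/-- A family of sets is discrete if every point has an open neighborhood meeting
at most one member. -/
def DiscreteFamily {X : Type u} [TopologicalSpace X] (𝓒 : Set (Set X)) : Prop :=
  ∀ x : X, ∃ U : Set X, IsOpen U ∧ x ∈ U ∧ {c ∈ 𝓒 | (c ∩ U).Nonempty}.Subsingleton

/-!
If `𝓒` is an infinite locally finite family of nonempty open sets, choose distinct `Cₙ ∈ 𝓒`
and Urysohn bumps `gₙ` supported in `Cₙ`; then `∑ n • gₙ` is a continuous real function that
is unbounded above. Pick points where its values `t₀, t₁, …` increase in steps of at least `1`:
the preimages of the balls of radius `1/4` around the `tₙ` form an infinite discrete family of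
nonempty open sets.
-/

open Function

section

variable {X : Type u} [TopologicalSpace X]

theorem LocFinFamily.locallyFinite {𝓒 : Set (Set X)} (h𝓒 : LocFinFamily 𝓒) :
    LocallyFinite ((↑) : 𝓒 → Set X) := by
  intro x
  obtain ⟨U, hU, hxU, hfin⟩ := h𝓒 x
  refine ⟨U, hU.mem_nhds hxU, ?_⟩
  exact (hfin.preimage Subtype.val_injective.injOn).subset fun c hc => ⟨c.2, hc⟩

theorem DiscreteFamily.preimage {Y : Type*} [TopologicalSpace Y] {f : X → Y} (hf : Continuous f)
    {𝓒 : Set (Set Y)} (h𝓒 : DiscreteFamily 𝓒) : DiscreteFamily (Set.preimage f '' 𝓒) := by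
  intro x
  obtain ⟨V, hV, hxV, hsub⟩ := h𝓒 (f x)
  refine ⟨f ⁻¹' V, hV.preimage hf, hxV, (hsub.image (Set.preimage f)).anti ?_⟩
  rintro _ ⟨⟨c, hc, rfl⟩, y, hyc, hyV⟩
  exact ⟨c, ⟨hc, f y, hyc, hyV⟩, rfl⟩

theorem CompletelyRegularSpace.exists_continuous_nonneg_support_subset [CompletelyRegularSpace X]
    {x : X} {U : Set X} (hU : IsOpen U) (hx : x ∈ U) :
    ∃ g : X → ℝ, Continuous g ∧ g x = 1 ∧ 0 ≤ g ∧ support g ⊆ U := by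
  obtain ⟨f, hf, hfx, hfU⟩ := CompletelyRegularSpace.completely_regular_isOpen x U hU hx
  refine ⟨fun y => 1 - f y, by fun_prop, by simp [hfx], fun y => sub_nonneg.2 (f y).2.2,
    fun y hy => ?_⟩
  by_contra hyU
  exact hy (by simp [hfU hyU])

theorem exists_continuous_not_bddAbove_of_locallyFinite [CompletelyRegularSpace X]
    {U : ℕ → Set X} (hlf : LocallyFinite U) (hU : ∀ n, IsOpen (U n)) (hne : ∀ n, (U n).Nonempty) :
    ∃ f : X → ℝ, Continuous f ∧ ¬BddAbove (range f) := by
  choose x hx using hne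
  choose g hgc hgx hg0 hgU using fun n =>
    CompletelyRegularSpace.exists_continuous_nonneg_support_subset (hU n) (hx n)
  have hsupp : LocallyFinite fun n : ℕ => support fun y => (n : ℝ) * g n y :=
    hlf.subset fun n => (support_mul_subset_right _ _).trans (hgU n)
  refine ⟨fun y => ∑ᶠ n : ℕ, (n : ℝ) * g n y,
    continuous_finsum (fun n => continuous_const.mul (hgc n)) hsupp, ?_⟩
  rw [not_bddAbove_iff]
  intro a
  obtain ⟨n, hn⟩ := exists_nat_gt a
  refine ⟨_, mem_range_self (x n), hn.trans_le ?_⟩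
  calc (n : ℝ) = n * g n (x n) := by rw [hgx, mul_one]
    _ ≤ _ := single_le_finsum n (hsupp.point_finite (x n))
        fun m => mul_nonneg m.cast_nonneg (hg0 m _)

theorem exists_seq_mem_add_one_le_of_not_bddAbove {S : Set ℝ} (hS : ¬BddAbove S) :
    ∃ t : ℕ → ℝ, (∀ n, t n ∈ S) ∧ ∀ n, t n + 1 ≤ t (n + 1) := by
  choose next hnextS hnext using not_bddAbove_iff.1 hS
  let t : ℕ → ℝ := fun n => Nat.rec (next 0) (fun _ s => next (s + 1)) n
  refine ⟨t, fun n => ?_, fun n => (hnext _).le⟩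
  cases n <;> exact hnextS _

theorem eq_of_dist_lt_one_of_add_one_le {t : ℕ → ℝ} (ht : ∀ n, t n + 1 ≤ t (n + 1))
    {j k : ℕ} (hjk : dist (t j) (t k) < 1) : j = k := by
  have hmono : Monotone fun n : ℕ => t n - n :=
    monotone_nat_of_le_succ fun n => by push_cast; linarith [ht n]
  have hgap : ∀ {j k : ℕ}, j < k → t j + 1 ≤ t k := fun {j k} hlt => by
    have hjk : t j - j ≤ t k - k := hmono hlt.le
    have : (j : ℝ) + 1 ≤ k := by exact_mod_cast hlt
    linarith
  rw [Real.dist_eq, abs_lt] at hjk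
  rcases lt_trichotomy j k with hlt | heq | hgt
  · linarith [hgap hlt]
  · exact heq
  · linarith [hgap hgt]

theorem discreteFamily_range_ball_of_add_one_le {t : ℕ → ℝ} (ht : ∀ n, t n + 1 ≤ t (n + 1)) :
    DiscreteFamily (range fun n => Metric.ball (t n) (1 / 4)) := by
  intro y
  refine ⟨Metric.ball y (1 / 4), Metric.isOpen_ball, Metric.mem_ball_self (by norm_num), ?_⟩
  rintro _ ⟨⟨j, rfl⟩, hj⟩ _ ⟨⟨k, rfl⟩, hk⟩
  have hj := Metric.dist_lt_add_of_nonempty_ball_inter_ball hj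
  have hk := Metric.dist_lt_add_of_nonempty_ball_inter_ball hk
  have hjk : dist (t j) (t k) < 1 :=
    calc dist (t j) (t k) ≤ dist (t j) y + dist (t k) y := dist_triangle_right ..
      _ < 1 := by linarith
  rw [eq_of_dist_lt_one_of_add_one_le ht hjk]

theorem exists_infinite_discreteFamily_of_not_bddAbove {f : X → ℝ} (hf : Continuous f)
    (hb : ¬BddAbove (range f)) :
    ∃ 𝓓 : Set (Set X), (∀ d ∈ 𝓓, IsOpen d ∧ d.Nonempty) ∧ DiscreteFamily 𝓓 ∧ 𝓓.Infinite := by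
  obtain ⟨t, htf, ht⟩ := exists_seq_mem_add_one_le_of_not_bddAbove hb
  choose x hx using htf
  have hmem : ∀ n, x n ∈ f ⁻¹' Metric.ball (t n) (1 / 4) := fun n => by
    simp [hx n]
  refine ⟨range fun n => f ⁻¹' Metric.ball (t n) (1 / 4), ?_, ?_, infinite_range_of_injective ?_⟩
  · rintro _ ⟨n, rfl⟩
    exact ⟨Metric.isOpen_ball.preimage hf, x n, hmem n⟩
  · simpa only [range_comp'] using (discreteFamily_range_ball_of_add_one_le ht).preimage hf
  · intro j k hjk
    have hxj : x j ∈ f ⁻¹' Metric.ball (t k) (1 / 4) := by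
      dsimp only at hjk
      exact hjk ▸ hmem j
    rw [mem_preimage, hx, Metric.mem_ball] at hxj
    exact eq_of_dist_lt_one_of_add_one_le ht (by linarith)

end

theorem locallyFinite_finite_of_discrete_finite_general
    {X : Type u} [TopologicalSpace X] [CompletelyRegularSpace X]
    (hd : ∀ 𝓒 : Set (Set X),
      (∀ c ∈ 𝓒, IsOpen c ∧ c.Nonempty) → DiscreteFamily 𝓒 → 𝓒.Finite) :
    ∀ 𝓒 : Set (Set X),
      (∀ c ∈ 𝓒, IsOpen c ∧ c.Nonempty) → LocFinFamily 𝓒 → 𝓒.Finite := by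
  intro 𝓒 h𝓒 hlf
  by_contra hinf
  let e : ℕ ↪ 𝓒 := Set.Infinite.natEmbedding 𝓒 hinf
  obtain ⟨f, hf, hfb⟩ := exists_continuous_not_bddAbove_of_locallyFinite
    (hlf.locallyFinite.comp_injective e.injective)
    (fun n => (h𝓒 (e n) (e n).2).1) (fun n => (h𝓒 (e n) (e n).2).2)
  obtain ⟨𝓓, h𝓓, hdisc, h𝓓inf⟩ := exists_infinite_discreteFamily_of_not_bddAbove hf hfb
  exact h𝓓inf (hd 𝓓 h𝓓 hdisc)

/-- in a Tychonoff space, if every discrete family of nonempty open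
sets is finite, then every locally finite family of nonempty open sets is finite. -/
theorem locallyFinite_finite_of_discrete_finite
    {X : Type u} [TopologicalSpace X] [CompletelyRegularSpace X] [T1Space X]
    (hd : ∀ 𝓒 : Set (Set X),
      (∀ c ∈ 𝓒, IsOpen c ∧ c.Nonempty) → DiscreteFamily 𝓒 → 𝓒.Finite) :
    ∀ 𝓒 : Set (Set X),
      (∀ c ∈ 𝓒, IsOpen c ∧ c.Nonempty) → LocFinFamily 𝓒 → 𝓒.Finite :=
  locallyFinite_finite_of_discrete_finite_general hd
end

section
/- Let X be a regular space possessing an infinite locally finite family of nonempty open sets. Then X possesses an infinite discrete family of nonempty open sets. -/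
open Set Topology Cardinal

universe u

/-- a regular space with an infinite locally finite family of
nonempty open sets has an infinite discrete family of nonempty open sets. -/
theorem infinite_discrete_of_infinite_locallyFinite
    {X : Type u} [TopologicalSpace X] [RegularSpace X]
    (h : ∃ 𝓒 : Set (Set X), (∀ c ∈ 𝓒, IsOpen c ∧ c.Nonempty) ∧
      LocFinFamily 𝓒 ∧ 𝓒.Infinite) :
    ∃ 𝓓 : Set (Set X), (∀ d ∈ 𝓓, IsOpen d ∧ d.Nonempty) ∧
      DiscreteFamily 𝓓 ∧ 𝓓.Infinite := by
    classical
  obtain ⟨𝓒, h𝓒, hlf, hinf⟩ := h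
  -- For each member c of 𝓒, choose a basic neighborhood W c meeting only
  -- finitely many members of 𝓒, and a nonempty open V c with closure ⊆ W c ∩ c.
  have key : ∀ c : Set X, ∃ W V : Set X, c ∈ 𝓒 →
      IsOpen W ∧ {c' ∈ 𝓒 | (c' ∩ W).Nonempty}.Finite ∧ (c ∩ W).Nonempty ∧
      IsOpen V ∧ V.Nonempty ∧ closure V ⊆ W ∩ c := by
    intro c
    by_cases hc : c ∈ 𝓒
    · obtain ⟨hco, x, hx⟩ := h𝓒 c hc
      obtain ⟨W, hWo, hxW, hWfin⟩ := hlf x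
      have hmem : W ∩ c ∈ 𝓝 x := (hWo.inter hco).mem_nhds ⟨hxW, hx⟩
      obtain ⟨t, ht, htc, hts⟩ := exists_mem_nhds_isClosed_subset hmem
      refine ⟨W, interior t, fun _ => ⟨hWo, hWfin, ⟨x, hx, hxW⟩, isOpen_interior,
        ⟨x, mem_interior_iff_mem_nhds.2 ht⟩, ?_⟩⟩
      calc closure (interior t) ⊆ closure t := closure_mono interior_subset
        _ = t := htc.closure_eq
        _ ⊆ W ∩ c := hts
    · exact ⟨∅, ∅, fun h => absurd h hc⟩
  choose W V hWV using key
  have hWfin : ∀ c ∈ 𝓒, {c' ∈ 𝓒 | (c' ∩ W c).Nonempty}.Finite := fun c hc => (hWV c hc).2.1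
  have hWc : ∀ c ∈ 𝓒, (c ∩ W c).Nonempty := fun c hc => (hWV c hc).2.2.1
  have hVo : ∀ c ∈ 𝓒, IsOpen (V c) := fun c hc => (hWV c hc).2.2.2.1
  have hVne : ∀ c ∈ 𝓒, (V c).Nonempty := fun c hc => (hWV c hc).2.2.2.2.1
  have hVcl : ∀ c ∈ 𝓒, closure (V c) ⊆ W c ∩ c := fun c hc => (hWV c hc).2.2.2.2.2
  -- A choice function picking a fresh member of 𝓒 avoiding all previous W's.
  have hpick : ∀ T : Set (Set X), ∃ p : Set X, T.Finite → T ⊆ 𝓒 →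
      p ∈ 𝓒 ∧ ∀ t ∈ T, p ∩ W t = ∅ := by
    intro T
    by_cases hT : T.Finite ∧ T ⊆ 𝓒
    · obtain ⟨hTf, hT𝓒⟩ := hT
      have hbad : {c ∈ 𝓒 | ∃ t ∈ T, (c ∩ W t).Nonempty}.Finite := by
        have hsub : {c ∈ 𝓒 | ∃ t ∈ T, (c ∩ W t).Nonempty} ⊆
            ⋃ t ∈ T, {c' ∈ 𝓒 | (c' ∩ W t).Nonempty} := by
          rintro c ⟨hc, t, ht, hne⟩
          exact mem_biUnion ht ⟨hc, hne⟩
        exact (hTf.biUnion (fun t ht => hWfin t (hT𝓒 ht))).subset hsub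
      obtain ⟨p, hp⟩ := (hinf.diff hbad).nonempty
      refine ⟨p, fun _ _ => ⟨hp.1, fun t ht => ?_⟩⟩
      rw [← not_nonempty_iff_eq_empty]
      exact fun hne => hp.2 ⟨hp.1, t, ht, hne⟩
    · exact ⟨∅, fun h1 h2 => absurd ⟨h1, h2⟩ hT⟩
  choose pick hpickspec using hpick
  -- Recursively build the sequence of chosen members.
  let g : ℕ → Set (Set X) := fun n => Nat.rec ∅ (fun _ s => insert (pick s) s) n
  have hg : ∀ n, g (n + 1) = insert (pick (g n)) (g n) := fun n => rfl
  have hgfin : ∀ n, (g n).Finite ∧ g n ⊆ 𝓒 := by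
    intro n
    induction n with
    | zero => exact ⟨finite_empty, empty_subset _⟩
    | succ n ih =>
      rw [hg]
      exact ⟨ih.1.insert _, insert_subset ((hpickspec (g n) ih.1 ih.2).1) ih.2⟩
  set C : ℕ → Set X := fun n => pick (g n) with hCdef
  have hC𝓒 : ∀ n, C n ∈ 𝓒 := fun n => (hpickspec (g n) (hgfin n).1 (hgfin n).2).1
  have hCavoid : ∀ n, ∀ t ∈ g n, C n ∩ W t = ∅ :=
    fun n => (hpickspec (g n) (hgfin n).1 (hgfin n).2).2
  have hmemg : ∀ m n, m < n → C m ∈ g n := by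
    intro m n h
    induction n with
    | zero => omega
    | succ n ih =>
      rw [hg]
      rcases Nat.lt_succ_iff_lt_or_eq.mp h with h' | h'
      · exact mem_insert_of_mem _ (ih h')
      · subst h'; exact mem_insert _ _
  have hkey : ∀ m n, m < n → C n ∩ W (C m) = ∅ :=
    fun m n h => hCavoid n (C m) (hmemg m n h)
  set D : ℕ → Set X := fun n => V (C n) with hDdef
  have hDsubC : ∀ n, D n ⊆ C n :=
    fun n y hy => (hVcl _ (hC𝓒 n) (subset_closure hy)).2
  have hdisj : ∀ m n, m < n → ∀ x, x ∈ closure (D n) → x ∈ closure (D m) → False := by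
    intro m n h x hxn hxm
    have h1 : x ∈ C n := (hVcl _ (hC𝓒 n) hxn).2
    have h2 : x ∈ W (C m) := (hVcl _ (hC𝓒 m) hxm).1
    have he := hkey m n h
    have : x ∈ C n ∩ W (C m) := ⟨h1, h2⟩
    rw [he] at this
    exact this
  have hdisj' : ∀ m n, m ≠ n → ∀ x, x ∈ closure (D n) → x ∈ closure (D m) → False := by
    intro m n hne x hxn hxm
    rcases lt_or_gt_of_ne hne with h | h
    · exact hdisj m n h x hxn hxm
    · exact hdisj n m h x hxm hxn
  have hCinj : Function.Injective C := by
    intro m n e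
    by_contra hne
    rcases lt_or_gt_of_ne hne with h | h
    · have := hkey m n h
      rw [e] at this
      exact (hWc (C n) (hC𝓒 n)).ne_empty this
    · have := hkey n m h
      rw [← e] at this
      exact (hWc (C m) (hC𝓒 m)).ne_empty this
  have hDinj : Function.Injective D := by
    intro m n e
    by_contra hne
    obtain ⟨y, hy⟩ := hVne (C n) (hC𝓒 n)
    have hyn : (y : X) ∈ closure (D n) := subset_closure hy
    have hym : (y : X) ∈ closure (D m) := by
      rw [show D m = D n from e]
      exact hyn
    exact hdisj' m n hne y hyn hym
  refine ⟨range D, ?_, ?_, Set.infinite_range_of_injective hDinj⟩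
  · rintro d ⟨n, rfl⟩
    exact ⟨hVo _ (hC𝓒 n), hVne _ (hC𝓒 n)⟩
  · intro x
    obtain ⟨U, hUo, hxU, hUfin⟩ := hlf x
    have hF : {n | (D n ∩ U).Nonempty}.Finite := by
      have hsub : {n | (D n ∩ U).Nonempty} ⊆ C ⁻¹' {c ∈ 𝓒 | (c ∩ U).Nonempty} := by
        rintro n ⟨y, hy1, hy2⟩
        exact ⟨hC𝓒 n, y, hDsubC n hy1, hy2⟩
      exact (hUfin.preimage hCinj.injOn).subset hsub
    set S := {n | (D n ∩ U).Nonempty ∧ x ∉ closure (D n)} with hSdef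
    have hSfin : S.Finite := hF.subset (fun n hn => hn.1)
    have hK : IsClosed (⋃ n ∈ S, closure (D n)) :=
      hSfin.isClosed_biUnion (fun n _ => isClosed_closure)
    refine ⟨U \ ⋃ n ∈ S, closure (D n), hUo.sdiff hK, ⟨hxU, ?_⟩, ?_⟩
    · intro hx
      obtain ⟨n, hnS, hxn⟩ := mem_iUnion₂.mp hx
      exact hnS.2 hxn
    · have hcl : ∀ n, (D n ∩ (U \ ⋃ m ∈ S, closure (D m))).Nonempty → x ∈ closure (D n) := by
        rintro n ⟨y, hyD, hyU, hyK⟩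
        by_contra hxn
        have hnS : n ∈ S := ⟨⟨y, hyD, hyU⟩, hxn⟩
        exact hyK (mem_iUnion₂.mpr ⟨n, hnS, subset_closure hyD⟩)
      rintro d ⟨⟨n, rfl⟩, hd⟩ d' ⟨⟨n', rfl⟩, hd'⟩
      rcases eq_or_ne n n' with rfl | hne
      · rfl
      · exact absurd (hcl n hd) (fun hx => hdisj' n' n (Ne.symm hne) x hx (hcl n' hd'))
end

section
/- Let X be a locally compact Hausdorff space that admits an infinite discrete family of nonempty open sets, and let Y = X ∪ {p} be its one-point compactification. Then p has a countable decreasing local π-base in Y; in particular p has a countable centered local π-base in Y. -/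
open Set Topology Cardinal

universe u

/-!
Enumerate infinitely many members `c 0, c 1, …` of the discrete family. Being discrete, the
family is locally finite, so a compact subset of `X` meets only finitely many `c m`. Hence every
neighbourhood `Y \ K` of `∞` contains a tail `⋃_{m ≥ n} c m`, and these tails form the
required decreasing local π-base.
-/

theorem DiscreteFamily.locallyFinite {X : Type u} [TopologicalSpace X] {𝓒 : Set (Set X)}
    (h𝓒 : DiscreteFamily 𝓒) : LocallyFinite ((↑) : 𝓒 → Set X) := by
  intro x
  obtain ⟨U, hU, hxU, hsub⟩ := h𝓒 x
  exact ⟨U, hU.mem_nhds hxU,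
    (hsub.finite.preimage Subtype.val_injective.injOn).subset fun c hc => ⟨c.2, hc⟩⟩

theorem LocallyFinite.exists_iUnion_ge_subset_compl {X : Type u} [TopologicalSpace X]
    {c : ℕ → Set X} (hc : LocallyFinite c) {K : Set X} (hK : IsCompact K) :
    ∃ n, ⋃ m ≥ n, c m ⊆ Kᶜ := by
  obtain ⟨N, hN⟩ := (hc.finite_nonempty_inter_compact hK).bddAbove
  refine ⟨N + 1, iUnion₂_subset fun m hm x hxc hxK => ?_⟩
  have : m ≤ N := hN ⟨x, hxc, hxK⟩
  omega

theorem isDecreasingLocalPiBase_infty_image_iUnion_ge {X : Type u} [TopologicalSpace X]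
    {c : ℕ → Set X} (hc_open : ∀ n, IsOpen (c n)) (hc_ne : ∀ n, (c n).Nonempty)
    (hc : LocallyFinite c) :
    IsDecreasingLocalPiBase (OnePoint.infty : OnePoint X)
      (fun n => (↑) '' ⋃ m ≥ n, c m) := by
  refine ⟨fun n => ⟨?_, ?_⟩, fun n => ?_, fun U hU hinf => ?_⟩
  · exact OnePoint.isOpenEmbedding_coe.isOpenMap _ (isOpen_biUnion fun m _ => hc_open m)
  · exact ((hc_ne n).mono (subset_biUnion_of_mem le_rfl)).image _
  · exact image_mono (biUnion_subset_biUnion_left fun m hm => (Nat.le_succ n).trans hm)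
  · obtain ⟨n, hn⟩ :=
      hc.exists_iUnion_ge_subset_compl ((OnePoint.isOpen_iff_of_mem hinf).1 hU).2
    refine ⟨n, image_subset_iff.2 fun x hx => ?_⟩
    simpa using hn hx

namespace IsDecreasingLocalPiBase

variable {X : Type u} [TopologicalSpace X] {p : X} {A : ℕ → Set X}

theorem antitone (hA : IsDecreasingLocalPiBase p A) : Antitone A :=
  antitone_nat_of_succ_le hA.2.1

theorem isLocalPiBase_range (hA : IsDecreasingLocalPiBase p A) : IsLocalPiBase p (range A) := by
  refine ⟨forall_mem_range.2 hA.1, fun U hU hp => ?_⟩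
  obtain ⟨n, hn⟩ := hA.2.2 U hU hp
  exact ⟨A n, mem_range_self n, hn⟩

theorem centered_range (hA : IsDecreasingLocalPiBase p A) : Centered (range A) := by
  intro F _ hF
  rw [← image_univ] at hF
  obtain ⟨s, -, rfl⟩ := Finset.subset_set_image_iff.1 hF
  obtain ⟨x, hx⟩ := (hA.1 (s.sup id)).2
  refine ⟨x, ?_⟩
  simp only [Finset.coe_image, sInter_image, mem_iInter₂]
  exact fun n hn => hA.antitone (Finset.le_sup (f := id) hn) hx

end IsDecreasingLocalPiBase

theorem onePoint_infty_has_decreasing_piBase_general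
    {X : Type u} [TopologicalSpace X]
    (h : ∃ 𝓒 : Set (Set X), (∀ c ∈ 𝓒, IsOpen c ∧ c.Nonempty) ∧
      DiscreteFamily 𝓒 ∧ 𝓒.Infinite) :
    (∃ A : ℕ → Set (OnePoint X), IsDecreasingLocalPiBase (OnePoint.infty : OnePoint X) A) ∧
    ∃ 𝓑 : Set (Set (OnePoint X)), 𝓑.Countable ∧
      IsLocalPiBase (OnePoint.infty : OnePoint X) 𝓑 ∧ Centered 𝓑 := by
  obtain ⟨𝓒, h𝓒, hdisc, hinf⟩ := h
  let e : ℕ ↪ 𝓒 := hinf.natEmbedding 𝓒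
  have hA := isDecreasingLocalPiBase_infty_image_iUnion_ge
    (fun n => (h𝓒 _ (e n).2).1) (fun n => (h𝓒 _ (e n).2).2)
    (hdisc.locallyFinite.comp_injective e.injective)
  exact ⟨⟨_, hA⟩, _, countable_range _, hA.isLocalPiBase_range, hA.centered_range⟩

/-- if a locally compact Hausdorff space has an infinite discrete
family of nonempty open sets, then the point at infinity of its one-point
compactification has a countable decreasing (hence centered) local π-base. -/
theorem onePoint_infty_has_decreasing_piBase
    {X : Type u} [TopologicalSpace X] [LocallyCompactSpace X] [T2Space X]
    (h : ∃ 𝓒 : Set (Set X), (∀ c ∈ 𝓒, IsOpen c ∧ c.Nonempty) ∧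
      DiscreteFamily 𝓒 ∧ 𝓒.Infinite) :
    (∃ A : ℕ → Set (OnePoint X), IsDecreasingLocalPiBase (OnePoint.infty : OnePoint X) A) ∧
    ∃ 𝓑 : Set (Set (OnePoint X)), 𝓑.Countable ∧
      IsLocalPiBase (OnePoint.infty : OnePoint X) 𝓑 ∧ Centered 𝓑 :=
  onePoint_infty_has_decreasing_piBase_general h
end

section
/- In the Čech–Stone compactification βω of the discrete natural numbers, no point of the remainder βω \ ω has a countable linked local π-base. Equivalently, πχl(βω) is uncountable. -/
open Set Topology Cardinal

universe u

/-!
Read a point `p ∈ βω` as the ultrafilter of those `S ⊆ ω` with `p ∈ cl S`. Since `cl S` is open,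
every such `S` contains the trace `b ∩ ω` of some member `b` of a local π-base at `p`. If the
π-base is linked and `p ∉ ω`, the traces are infinite: a finite trace has its complement in the
ultrafilter, but by linkedness and density no trace fits inside the complement of another.
Countably many infinite sets are split by a single `Y ⊆ ω`, and then neither `Y` nor `ω \ Y`
contains a trace.
-/

open Function

section Splitting

variable {α : Type*}

theorem exists_injective_forall_mem_of_infinite {A : ℕ → Set α} (hA : ∀ n, (A n).Infinite) :
    ∃ c : ℕ → α, Injective c ∧ ∀ n, c n ∈ A n := by
  classical
  choose pick hpick_mem hpick_notMem using fun n (s : Finset α) => (hA n).exists_notMem_finset s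
  -- `chosen n` is the finset of the first `n` chosen points.
  let chosen : ℕ → Finset α := fun n => Nat.rec ∅ (fun k s => insert (pick k s) s) n
  have hchosen : Monotone chosen := monotone_nat_of_le_succ fun _ => Finset.subset_insert _ _
  refine ⟨fun n => pick n (chosen n), Injective.of_lt_imp_ne fun j k hjk hjk_eq => ?_,
    fun n => hpick_mem n _⟩
  apply hpick_notMem k (chosen k)
  rw [← hjk_eq]
  exact hchosen hjk (Finset.mem_insert_self _ _)

theorem Set.Countable.exists_forall_inter_nonempty_and_diff_nonempty {𝒜 : Set (Set α)}
    (h𝒜 : 𝒜.Countable) (h𝒜_inf : ∀ A ∈ 𝒜, A.Infinite) :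
    ∃ Y : Set α, ∀ A ∈ 𝒜, (A ∩ Y).Nonempty ∧ (A \ Y).Nonempty := by
  rcases 𝒜.eq_empty_or_nonempty with rfl | h𝒜_ne
  · exact ⟨∅, by simp⟩
  obtain ⟨A, rfl⟩ := h𝒜.exists_eq_range h𝒜_ne
  obtain ⟨c, hc_inj, hc⟩ := exists_injective_forall_mem_of_infinite (A := fun k => A (k / 2))
    fun k => h𝒜_inf _ (mem_range_self _)
  refine ⟨range fun n => c (2 * n), forall_mem_range.2 fun n => ⟨?_, ?_⟩⟩
  · refine ⟨c (2 * n), ?_, n, rfl⟩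
    simpa using hc (2 * n)
  · refine ⟨c (2 * n + 1), ?_, ?_⟩
    · simpa [Nat.add_div_of_dvd_right] using hc (2 * n + 1)
    · rintro ⟨m, hm⟩
      have := hc_inj hm
      omega

end Splitting

section StoneCech

variable {α : Type*} [TopologicalSpace α]

theorem mem_closure_image_stoneCechUnit_or_compl (p : StoneCech α) (S : Set α) :
    p ∈ closure (stoneCechUnit '' S) ∨ p ∈ closure (stoneCechUnit '' Sᶜ) := by
  rw [← mem_union, ← closure_union, ← image_union, union_compl_self, image_univ,
    denseRange_stoneCechUnit.closure_eq]
  exact mem_univ p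

theorem notMem_closure_image_stoneCechUnit_of_finite {p : StoneCech α}
    (hp : p ∉ range (stoneCechUnit : α → StoneCech α)) {S : Set α} (hS : S.Finite) :
    p ∉ closure (stoneCechUnit '' S) := by
  rw [(hS.image _).isClosed.closure_eq]
  exact fun ⟨a, _, hap⟩ => hp ⟨a, hap⟩

variable [DiscreteTopology α]

theorem disjoint_closure_image_stoneCechUnit_compl (S : Set α) :
    Disjoint (closure (stoneCechUnit '' S)) (closure (stoneCechUnit '' Sᶜ)) := by
  classical
  -- Separate the two closures by the extension of the indicator of `S` to `βα → Bool`.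
  have hχ : Continuous fun a => decide (a ∈ S) := continuous_of_discreteTopology
  have hχ' := continuous_stoneCechExtend hχ
  have hsub (b : Bool) (T : Set α) (hT : ∀ a ∈ T, decide (a ∈ S) = b) :
      closure (stoneCechUnit '' T) ⊆ stoneCechExtend hχ ⁻¹' {b} :=
    closure_minimal (by rintro _ ⟨a, ha, rfl⟩; simp [hT a ha])
      ((isClosed_discrete _).preimage hχ')
  refine Disjoint.mono (hsub true S fun a ha => by simpa using ha)
    (hsub false Sᶜ fun a ha => by simpa using ha) ?_
  simp [disjoint_iff_inter_eq_empty, ← preimage_inter]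

theorem compl_closure_image_stoneCechUnit_compl (S : Set α) :
    (closure (stoneCechUnit '' Sᶜ))ᶜ = closure (stoneCechUnit '' S) := by
  ext p
  constructor
  · exact (mem_closure_image_stoneCechUnit_or_compl p S).resolve_right
  · exact fun hp => (disjoint_closure_image_stoneCechUnit_compl S).notMem_of_mem_left hp

theorem isOpen_closure_image_stoneCechUnit (S : Set α) :
    IsOpen (closure (stoneCechUnit '' S)) := by
  rw [← compl_closure_image_stoneCechUnit_compl]
  exact isClosed_closure.isOpen_compl

theorem preimage_stoneCechUnit_closure_image (S : Set α) :
    stoneCechUnit ⁻¹' closure (stoneCechUnit '' S) = S := by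
  refine Subset.antisymm (fun a ha => ?_) fun a ha => subset_closure (mem_image_of_mem _ ha)
  by_contra haS
  exact (disjoint_closure_image_stoneCechUnit_compl S).notMem_of_mem_left ha
    (subset_closure (mem_image_of_mem _ haS))

variable {p : StoneCech α} {𝓑 : Set (Set (StoneCech α))}

theorem IsLocalPiBase.exists_preimage_stoneCechUnit_subset (h𝓑 : IsLocalPiBase p 𝓑) {S : Set α}
    (hpS : p ∈ closure (stoneCechUnit '' S)) : ∃ b ∈ 𝓑, stoneCechUnit ⁻¹' b ⊆ S := by
  obtain ⟨b, hb, hbS⟩ := h𝓑.2 _ (isOpen_closure_image_stoneCechUnit S) hpS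
  exact ⟨b, hb, (preimage_mono hbS).trans (preimage_stoneCechUnit_closure_image S).subset⟩

theorem IsLocalPiBase.infinite_preimage_stoneCechUnit (h𝓑 : IsLocalPiBase p 𝓑)
    (h𝓑_linked : Linked 𝓑) (hp : p ∉ range (stoneCechUnit : α → StoneCech α))
    {b : Set (StoneCech α)} (hb : b ∈ 𝓑) : (stoneCechUnit ⁻¹' b).Infinite := by
  intro hb_fin
  obtain ⟨b', hb', hb'_sub⟩ := h𝓑.exists_preimage_stoneCechUnit_subset
    ((mem_closure_image_stoneCechUnit_or_compl p _).resolve_left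
      (notMem_closure_image_stoneCechUnit_of_finite hp hb_fin))
  obtain ⟨a, ha', ha⟩ := denseRange_stoneCechUnit.exists_mem_open
    ((h𝓑.1 b' hb').1.inter (h𝓑.1 b hb).1) (h𝓑_linked b' hb' b hb)
  exact hb'_sub ha' ha

end StoneCech

/-- no point of the remainder of βω admits a countable linked local
π-base (so πχl(βω) is uncountable). -/
theorem stoneCech_remainder_no_countable_linked_piBase
    (p : StoneCech ℕ) (hp : p ∉ Set.range (stoneCechUnit : ℕ → StoneCech ℕ)) :
    ¬ ∃ 𝓑 : Set (Set (StoneCech ℕ)), 𝓑.Countable ∧ IsLocalPiBase p 𝓑 ∧ Linked 𝓑 := by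
  rintro ⟨𝓑, h𝓑_count, h𝓑, h𝓑_linked⟩
  obtain ⟨Y, hY⟩ := Set.Countable.exists_forall_inter_nonempty_and_diff_nonempty
    (h𝓑_count.image (preimage stoneCechUnit))
    (forall_mem_image.2 fun _ hb => h𝓑.infinite_preimage_stoneCechUnit h𝓑_linked hp hb)
  rcases mem_closure_image_stoneCechUnit_or_compl p Y with hpY | hpY
  · obtain ⟨b, hb, hbY⟩ := h𝓑.exists_preimage_stoneCechUnit_subset hpY
    obtain ⟨a, ha, haY⟩ := (hY _ (mem_image_of_mem _ hb)).2
    exact haY (hbY ha)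
  · obtain ⟨b, hb, hbY⟩ := h𝓑.exists_preimage_stoneCechUnit_subset hpY
    obtain ⟨a, ha, haY⟩ := (hY _ (mem_image_of_mem _ hb)).1
    exact hbY ha haY
end

section
/- If X is a Hausdorff space, then wψc(X) ≤ wψcF(X) ≤ πχc(X): every point admits a weak closed pseudobase of cardinality at most the least cardinality of a centered local π-base at that point, and the centered local π-base itself is a weak closed pseudobase with the finite intersection property. -/
open Set Topology Cardinal

universe u

/-- The least infinite cardinality of a centered local π-base at `p`. -/
noncomputable def piChiC {X : Type u} [TopologicalSpace X] (p : X) : Cardinal.{u} :=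
  sInf {c | ∃ 𝓑 : Set (Set X), IsLocalPiBase p 𝓑 ∧ Centered 𝓑 ∧ #𝓑 = c} ⊔ ℵ₀

/-- The least infinite cardinality of a weak closed pseudobase at `p`. -/
noncomputable def wPsiC {X : Type u} [TopologicalSpace X] (p : X) : Cardinal.{u} :=
  sInf {c | ∃ 𝓑 : Set (Set X), IsWeakClosedPseudobase p 𝓑 ∧ #𝓑 = c} ⊔ ℵ₀

/-- The least infinite cardinality of a weak closed pseudobase at `p` with the
finite intersection property. -/
noncomputable def wPsiCF {X : Type u} [TopologicalSpace X] (p : X) : Cardinal.{u} :=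
  sInf {c | ∃ 𝓑 : Set (Set X), IsWeakClosedPseudobase p 𝓑 ∧ Centered 𝓑 ∧ #𝓑 = c} ⊔ ℵ₀

/-- in a Hausdorff space, every centered local π-base at `p` is a
weak closed pseudobase at `p` with the finite intersection property, and
wψc(p,X) ≤ wψcF(p,X) ≤ πχc(p,X) at every point. -/
theorem wPsiC_le_wPsiCF_le_piChiC
    {X : Type u} [TopologicalSpace X] [T2Space X] :
    (∀ (p : X) (𝓑 : Set (Set X)), IsLocalPiBase p 𝓑 → Centered 𝓑 →
      IsWeakClosedPseudobase p 𝓑) ∧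
    (∀ p : X, wPsiC p ≤ wPsiCF p ∧ wPsiCF p ≤ piChiC p) := by
  have main : ∀ (p : X) (𝓑 : Set (Set X)), IsLocalPiBase p 𝓑 → Centered 𝓑 →
      IsWeakClosedPseudobase p 𝓑 := by
    rintro p 𝓑 ⟨hopen, hbase⟩ hcent
    classical
    refine ⟨fun b hb => (hopen b hb).1, ?_⟩
    ext q
    simp only [mem_iInter, mem_singleton_iff]
    constructor
    · intro hq
      by_contra hne
      obtain ⟨U, V, hU, hV, hqU, hpV, hUV⟩ := t2_separation hne
      obtain ⟨b, hb, hbV⟩ := hbase V hV hpV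
      have hmem : (U ∩ b).Nonempty := by
        have := hq b hb
        rw [mem_closure_iff] at this
        exact this U hU hqU
      obtain ⟨x, hxU, hxb⟩ := hmem
      exact hUV.ne_of_mem hxU (hbV hxb) rfl
    · rintro rfl b hb
      rw [mem_closure_iff]
      intro U hU hpU
      obtain ⟨b', hb', hb'U⟩ := hbase U hU hpU
      have hne : (⋂₀ (↑({b, b'} : Finset (Set X)) : Set (Set X))).Nonempty := by
        refine hcent {b, b'} ⟨b, by simp⟩ ?_
        intro x hx
        simp only [Finset.coe_insert, Finset.coe_singleton, mem_insert_iff,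
          mem_singleton_iff] at hx
        rcases hx with rfl | rfl
        · exact hb
        · exact hb'
      simp only [Finset.coe_insert, Finset.coe_singleton, sInter_insert,
        sInter_singleton] at hne
      obtain ⟨x, hxb, hxb'⟩ := hne
      exact ⟨x, hb'U hxb', hxb⟩
  refine ⟨main, fun p => ?_⟩
  -- the family of all open neighborhoods of p is a centered local π-base
  set 𝓝p : Set (Set X) := {U | IsOpen U ∧ p ∈ U} with h𝓝p
  have hpi : IsLocalPiBase p 𝓝p := by
    refine ⟨fun b hb => ⟨hb.1, ⟨p, hb.2⟩⟩, fun U hU hpU => ⟨U, ⟨hU, hpU⟩, subset_rfl⟩⟩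
  have hcent : Centered 𝓝p := by
    intro F hF hFsub
    exact ⟨p, fun s hs => (hFsub hs).2⟩
  -- set inclusions
  set Sπ := {c | ∃ 𝓑 : Set (Set X), IsLocalPiBase p 𝓑 ∧ Centered 𝓑 ∧ #𝓑 = c}
  set SF := {c | ∃ 𝓑 : Set (Set X), IsWeakClosedPseudobase p 𝓑 ∧ Centered 𝓑 ∧ #𝓑 = c}
  set SW := {c | ∃ 𝓑 : Set (Set X), IsWeakClosedPseudobase p 𝓑 ∧ #𝓑 = c}
  have hπne : Sπ.Nonempty := ⟨#𝓝p, 𝓝p, hpi, hcent, rfl⟩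
  have hπF : Sπ ⊆ SF := by
    rintro c ⟨𝓑, hπ, hc, hcard⟩
    exact ⟨𝓑, main p 𝓑 hπ hc, hc, hcard⟩
  have hFW : SF ⊆ SW := by
    rintro c ⟨𝓑, hw, _, hcard⟩
    exact ⟨𝓑, hw, hcard⟩
  have hFne : SF.Nonempty := ⟨#𝓝p, hπF ⟨𝓝p, hpi, hcent, rfl⟩⟩
  constructor
  · exact sup_le_sup_right (csInf_le_csInf (OrderBot.bddBelow _) hFne hFW) _
  · exact sup_le_sup_right (csInf_le_csInf (OrderBot.bddBelow _) hπne hπF) _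
end

section
/- Let X be a Hausdorff space, p ∈ X, D ⊆ X dense, and B a linked local π-base at p. Then for every B ∈ 𝓑, the point p lies in the closure of B ∩ D_p, where D_p is any set containing, for each pair B₁, B₂ ∈ 𝓑, a point of B₁ ∩ B₂ ∩ D. Consequently {p} = ⋂_{B∈𝓑} cl(B ∩ D_p). -/
open Set Topology Cardinal

universe u

/-- if `𝓑` is a linked local π-base at `p` in a Hausdorff space,
`D` is dense, and `Dₚ` contains, for each pair of members of `𝓑`, a point of
their intersection with `D`, then `p ∈ closure (B ∩ Dₚ)` for every `B ∈ 𝓑`, and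
`⋂_{B ∈ 𝓑} closure (B ∩ Dₚ) = {p}`. -/
theorem closure_inter_dense_of_linked_piBase
    {X : Type u} [TopologicalSpace X] [T2Space X] (p : X) (D Dp : Set X)
    (hD : Dense D) (𝓑 : Set (Set X)) (hB : IsLocalPiBase p 𝓑) (hl : Linked 𝓑)
    (hDp : ∀ b₁ ∈ 𝓑, ∀ b₂ ∈ 𝓑, ∃ d ∈ Dp, d ∈ b₁ ∩ b₂ ∩ D) :
    (∀ b ∈ 𝓑, p ∈ closure (b ∩ Dp)) ∧ (⋂ b ∈ 𝓑, closure (b ∩ Dp)) = {p} := by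
  have h1 : ∀ b ∈ 𝓑, p ∈ closure (b ∩ Dp) := by
    intro b hb
    rw [mem_closure_iff]
    intro U hU hpU
    obtain ⟨b', hb', hsub⟩ := hB.2 U hU hpU
    obtain ⟨d, hdDp, hd⟩ := hDp b hb b' hb'
    exact ⟨d, hsub hd.1.2, hd.1.1, hdDp⟩
  refine ⟨h1, ?_⟩
  apply Set.eq_singleton_iff_unique_mem.2
  constructor
  · exact Set.mem_iInter₂.2 fun b hb => h1 b hb
  · intro x hx
    by_contra hxp
    obtain ⟨V, U, hV, hU, hxV, hpU, hVU⟩ := t2_separation hxp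
    obtain ⟨b, hb, hsub⟩ := hB.2 U hU hpU
    have hxb : x ∈ closure b := closure_mono inter_subset_left (Set.mem_iInter₂.1 hx b hb)
    obtain ⟨y, hyV, hyb⟩ := mem_closure_iff.1 hxb V hV hxV
    exact Set.disjoint_left.1 hVU hyV (hsub hyb)
end

section
/- Let X be the one-point compactification of a Ψ-space (Mrówka–Isbell space) Ψ(𝓐) built from a non-maximal almost disjoint family 𝓐 of infinite subsets of ω with |𝓐| = 𝔠. Then X is a separable compact Hausdorff space with πχd(X) = ℵ₀ and χ(X) = 𝔠; hence 2^{c(X)·πχd(X)} = 𝔠 < 2^𝔠 = 2^{c(X)·χ(X)}. -/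
/-!
Almost disjointness makes Ψ(𝓐) Hausdorff; each `{x_A} ∪ A` is a convergent sequence with its
limit, hence a compact open neighbourhood of `x_A`, so Ψ(𝓐) is locally compact. It is also first
countable, and ℕ is dense in it. Its one-point compactification is therefore compact, Hausdorff and separable
(hence ccc), and every point other than `∞` has a countable decreasing neighbourhood base.

A compact subset of Ψ(𝓐) is covered by finitely many sets `{x_A} ∪ A` and finitely many points.
Hence an infinite `C ⊆ ℕ` almost disjoint from every member of `𝓐` meets it in a finite set, and
the tails of `C` form a decreasing π-base at `∞`; and since a compact set contains only finitely
many `x_A`, a neighbourhood base at `∞` has at least `|𝓐| = 𝔠` members, while the complements of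
finite unions of the sets `{x_A} ∪ A` form one of size `𝔠`.
-/

open Set Topology Cardinal

universe u

/-- The least infinite cardinality of an open neighborhood base at `p`. -/
noncomputable def chiAt {X : Type u} [TopologicalSpace X] (p : X) : Cardinal.{u} :=
  sInf {c | ∃ 𝓑 : Set (Set X), IsNhdBase p 𝓑 ∧ #𝓑 = c} ⊔ ℵ₀

/-- The underlying set of the Ψ-space (Mrówka–Isbell space) over an almost
disjoint family `𝓐` of subsets of ℕ: the natural numbers together with one
point `x_A` for each `A ∈ 𝓐`. -/
def PsiSpace (𝓐 : Set (Set ℕ)) : Type := ℕ ⊕ ↥𝓐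

/-- The Ψ-space topology: points of ℕ are isolated, and basic neighborhoods of
`x_A` are `{x_A} ∪ (A \ F)` for finite `F`. -/
instance (𝓐 : Set (Set ℕ)) : TopologicalSpace (PsiSpace 𝓐) :=
  TopologicalSpace.generateFrom
    ({s : Set (PsiSpace 𝓐) | ∃ n : ℕ, s = {Sum.inl n}} ∪
     {s : Set (PsiSpace 𝓐) | ∃ (A : ↥𝓐) (F : Finset ℕ),
        s = insert (Sum.inr A) (Sum.inl '' ((A : Set ℕ) \ ↑F))})

open Filter
open scoped OnePoint

section

variable {X : Type u} [TopologicalSpace X]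

theorem Filter.HasAntitoneBasis.isNhdBase_range_interior {p : X} {s : ℕ → Set X}
    (hs : (𝓝 p).HasAntitoneBasis s) : IsNhdBase p (range fun n => interior (s n)) := by
  refine ⟨?_, fun U hU hp => ?_⟩
  · rintro _ ⟨n, rfl⟩
    exact ⟨isOpen_interior, mem_interior_iff_mem_nhds.2 (hs.mem n)⟩
  · obtain ⟨n, hn⟩ := hs.mem_iff.1 (hU.mem_nhds hp)
    exact ⟨_, ⟨n, rfl⟩, interior_subset.trans hn⟩

theorem exists_isDecreasingLocalPiBase (p : X) [(𝓝 p).IsCountablyGenerated] :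
    ∃ A : ℕ → Set X, IsDecreasingLocalPiBase p A := by
  obtain ⟨s, hs⟩ := (𝓝 p).exists_antitone_basis
  obtain ⟨hopen, hbase⟩ := hs.isNhdBase_range_interior
  refine ⟨fun n => interior (s n), fun n => ?_, fun n => interior_mono (hs.antitone n.le_succ),
    fun U hU hp => ?_⟩
  · obtain ⟨hn, hpn⟩ := hopen _ ⟨n, rfl⟩
    exact ⟨hn, p, hpn⟩
  · obtain ⟨_, ⟨n, rfl⟩, hn⟩ := hbase U hU hp
    exact ⟨n, hn⟩

theorem chiAt_le_mk_max {p : X} {𝓑 : Set (Set X)} (h𝓑 : IsNhdBase p 𝓑) : chiAt p ≤ max #𝓑 ℵ₀ :=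
  sup_le_sup_right (csInf_le' (show #𝓑 ∈ {c | ∃ 𝓑' : Set (Set X), IsNhdBase p 𝓑' ∧ #𝓑' = c}
    from ⟨𝓑, h𝓑, rfl⟩)) _

theorem chiAt_le_aleph0 (p : X) [(𝓝 p).IsCountablyGenerated] : chiAt p ≤ ℵ₀ := by
  obtain ⟨s, hs⟩ := (𝓝 p).exists_antitone_basis
  refine (chiAt_le_mk_max hs.isNhdBase_range_interior).trans (max_le ?_ le_rfl)
  exact le_aleph0_iff_set_countable.2 (countable_range _)

theorem chiAt_eq_of_isNhdBase {p : X} {𝓑 : Set (Set X)} {κ : Cardinal.{u}} (hκ : ℵ₀ ≤ κ)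
    (h𝓑 : IsNhdBase p 𝓑) (hle : #𝓑 ≤ κ) (hge : ∀ 𝓑', IsNhdBase p 𝓑' → κ ≤ #𝓑') :
    chiAt p = κ := by
  refine le_antisymm ((chiAt_le_mk_max h𝓑).trans (max_le hle hκ)) (le_sup_of_le_left ?_)
  exact le_csInf ⟨_, 𝓑, h𝓑, rfl⟩ fun _ ⟨𝓑', h, hc⟩ => hc ▸ hge 𝓑' h

theorem IsCellular.countable [TopologicalSpace.SeparableSpace X] {𝓒 : Set (Set X)}
    (h𝓒 : IsCellular 𝓒) : 𝓒.Countable :=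
  h𝓒.2.countable_of_isOpen (fun c hc => (h𝓒.1 c hc).1) fun c hc => (h𝓒.1 c hc).2

end

namespace OnePoint

variable {X : Type u} [TopologicalSpace X]

instance [TopologicalSpace.SeparableSpace X] : TopologicalSpace.SeparableSpace (OnePoint X) := by
  obtain ⟨D, hDc, hD⟩ := TopologicalSpace.exists_countable_dense X
  refine ⟨insert ∞ ((↑) '' D), (hDc.image _).insert _, fun z => ?_⟩
  induction z using OnePoint.rec with
  | infty => exact subset_closure (mem_insert _ _)
  | coe x =>
    exact closure_mono (subset_insert _ _)
      (image_closure_subset_closure_image continuous_coe ⟨x, hD x, rfl⟩)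

instance isCountablyGenerated_nhds_coe (x : X) [(𝓝 x).IsCountablyGenerated] :
    (𝓝 (x : OnePoint X)).IsCountablyGenerated := by
  rw [nhds_coe_eq]
  infer_instance

theorem iSup_chiAt [FirstCountableTopology X] :
    ⨆ p : OnePoint X, chiAt p = chiAt (∞ : OnePoint X) := by
  have hle : ∀ p : OnePoint X, chiAt p ≤ chiAt (∞ : OnePoint X) := fun p => by
    induction p using OnePoint.rec with
    | infty => exact le_rfl
    | coe x => exact (chiAt_le_aleph0 _).trans le_sup_right
  exact le_antisymm (ciSup_le' hle) (le_ciSup ⟨_, forall_mem_range.2 hle⟩ ∞)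

theorem isNhdBase_infty {𝒦 : Set (Set X)} (hclosed : ∀ K ∈ 𝒦, IsClosed K)
    (hcompact : ∀ K ∈ 𝒦, IsCompact K) (hcofinal : ∀ L, IsCompact L → ∃ K ∈ 𝒦, L ⊆ K) :
    IsNhdBase (∞ : OnePoint X) ((fun K => ((↑) '' K)ᶜ) '' 𝒦) := by
  refine ⟨?_, fun U hU hmem => ?_⟩
  · rintro _ ⟨K, hK, rfl⟩
    exact ⟨isOpen_compl_image_coe.2 ⟨hclosed K hK, hcompact K hK⟩, infty_notMem_image_coe⟩
  · obtain ⟨K, hK, hLK⟩ := hcofinal _ ((isOpen_iff_of_mem' hmem).1 hU).1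
    refine ⟨_, ⟨K, hK, rfl⟩, fun z hz => ?_⟩
    induction z using OnePoint.rec with
    | infty => exact hmem
    | coe x => exact not_not.1 fun hx => hz ⟨x, hLK hx, rfl⟩

/-- Each `x i` is excluded by some member of the base, and a member excludes only finitely many
`x i` because its complement is compact. -/
theorem mk_le_mk_mul_aleph0_of_isNhdBase_infty [T1Space X] {ι : Type u} (x : ι → X)
    (hx : ∀ K : Set X, IsCompact K → {i | x i ∈ K}.Finite) {𝓑 : Set (Set (OnePoint X))}
    (h𝓑 : IsNhdBase ∞ 𝓑) : #ι ≤ #𝓑 * ℵ₀ := by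
  have hexcl : ∀ i, ∃ b ∈ 𝓑, b ⊆ {(x i : OnePoint X)}ᶜ := fun i =>
    h𝓑.2 _ isClosed_singleton.isOpen_compl (coe_ne_infty (x i)).symm
  choose b hb𝓑 hbx using hexcl
  refine mk_le_mk_mul_of_mk_preimage_le (fun i => (⟨b i, hb𝓑 i⟩ : 𝓑)) fun c => ?_
  obtain ⟨hc, hmem⟩ := h𝓑.1 c c.2
  refine ((hx _ ((isOpen_iff_of_mem' hmem).1 hc).1).subset ?_).lt_aleph0.le
  rintro i rfl hi
  exact hbx i hi rfl

theorem isDecreasingLocalPiBase_infty {s : ℕ → Set X} (hopen : ∀ n, IsOpen (s n))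
    (hne : ∀ n, (s n).Nonempty) (hanti : Antitone s)
    (hcompact : ∀ K : Set X, IsCompact K → ∃ n, Disjoint (s n) K) :
    IsDecreasingLocalPiBase (∞ : OnePoint X) fun n => (↑) '' s n := by
  refine ⟨fun n => ⟨isOpen_image_coe.2 (hopen n), (hne n).image _⟩,
    fun n => image_mono (hanti n.le_succ), fun U hU hmem => ?_⟩
  obtain ⟨n, hn⟩ := hcompact _ ((isOpen_iff_of_mem' hmem).1 hU).1
  exact ⟨n, image_subset_iff.2 fun x hx => not_not.1 (hn.subset_compl_right hx)⟩

end OnePoint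

namespace PsiSpace

variable {𝓐 : Set (Set ℕ)}

abbrev inl (n : ℕ) : PsiSpace 𝓐 := Sum.inl n

abbrev inr (A : 𝓐) : PsiSpace 𝓐 := Sum.inr A

@[simp]
theorem inl_inj {m n : ℕ} : (inl m : PsiSpace 𝓐) = inl n ↔ m = n := Sum.inl.inj_iff

@[simp]
theorem inr_inj {A B : 𝓐} : inr A = inr B ↔ A = B := Sum.inr.inj_iff

@[simp]
theorem inr_ne_inl {n : ℕ} {A : 𝓐} : inr A ≠ inl n := Sum.inr_ne_inl

def basicNhd (A : 𝓐) (F : Finset ℕ) : Set (PsiSpace 𝓐) :=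
  insert (inr A) (inl '' ((A : Set ℕ) \ F))

@[simp]
theorem inl_mem_basicNhd {A : 𝓐} {F : Finset ℕ} {m : ℕ} :
    inl m ∈ basicNhd A F ↔ m ∈ (A : Set ℕ) ∧ m ∉ F := by
  simp [basicNhd]

@[simp]
theorem inr_mem_basicNhd {A B : 𝓐} {F : Finset ℕ} : inr B ∈ basicNhd A F ↔ B = A := by
  simp [basicNhd]

theorem antitone_basicNhd (A : 𝓐) : Antitone (basicNhd A) := fun _ _ hFG =>
  insert_subset_insert (image_mono (sdiff_subset_sdiff_right (Finset.coe_subset.2 hFG)))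

theorem isOpen_singleton_inl (n : ℕ) : IsOpen ({inl n} : Set (PsiSpace 𝓐)) :=
  TopologicalSpace.isOpen_generateFrom_of_mem (Or.inl ⟨n, rfl⟩)

theorem isOpen_basicNhd (A : 𝓐) (F : Finset ℕ) : IsOpen (basicNhd A F) :=
  TopologicalSpace.isOpen_generateFrom_of_mem (Or.inr ⟨A, F, rfl⟩)

theorem nhds_inl (n : ℕ) : 𝓝 (inl n : PsiSpace 𝓐) = pure (inl n) :=
  (isOpen_singleton_iff_nhds_eq_pure _).1 (isOpen_singleton_inl n)

theorem hasBasis_nhds_inr (A : 𝓐) : (𝓝 (inr A)).HasBasis (fun _ => True) (basicNhd A) := by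
  rw [TopologicalSpace.nhds_generateFrom]
  convert hasBasis_iInf_principal (antitone_basicNhd A).directed_ge using 1
  rw [← iInf_range]
  refine congrArg (fun S : Set (Set (PsiSpace 𝓐)) => ⨅ s ∈ S, 𝓟 s) (Set.ext fun s => ?_)
  constructor
  · rintro ⟨hA, ⟨n, rfl⟩ | ⟨B, F, rfl⟩⟩
    · exact absurd hA Sum.inr_ne_inl
    · obtain rfl : A = B := inr_mem_basicNhd.1 hA
      exact ⟨F, rfl⟩
  · rintro ⟨F, rfl⟩
    exact ⟨mem_insert _ _, Or.inr ⟨A, F, rfl⟩⟩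

instance : FirstCountableTopology (PsiSpace 𝓐) where
  nhds_generated_countable
    | .inl n => nhds_inl (𝓐 := 𝓐) n ▸ inferInstance
    | .inr A => (hasBasis_nhds_inr A).isCountablyGenerated

theorem denseRange_inl (hinf : ∀ A ∈ 𝓐, A.Infinite) : DenseRange (inl : ℕ → PsiSpace 𝓐) := by
  intro x
  rcases x with n | A
  · exact subset_closure ⟨n, rfl⟩
  · refine (mem_closure_iff_nhds_basis (hasBasis_nhds_inr A)).2 fun F _ => ?_
    obtain ⟨m, hm⟩ := ((hinf A A.2).sdiff F.finite_toSet).nonempty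
    exact ⟨inl m, ⟨m, rfl⟩, inl_mem_basicNhd.2 hm⟩

theorem separableSpace (hinf : ∀ A ∈ 𝓐, A.Infinite) :
    TopologicalSpace.SeparableSpace (PsiSpace 𝓐) :=
  ⟨⟨_, countable_range _, denseRange_inl hinf⟩⟩

theorem disjoint_basicNhd {A B : 𝓐} (hAB : A ≠ B) {F : Finset ℕ}
    (hF : (A : Set ℕ) ∩ B ⊆ F) : Disjoint (basicNhd A F) (basicNhd B F) := by
  rw [Set.disjoint_left]
  rintro (m | C) hA hB
  · exact (inl_mem_basicNhd.1 hA).2 (hF ⟨(inl_mem_basicNhd.1 hA).1, (inl_mem_basicNhd.1 hB).1⟩)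
  · exact hAB ((inr_mem_basicNhd.1 hA).symm.trans (inr_mem_basicNhd.1 hB))

theorem t2Space (had : 𝓐.Pairwise fun A B => (A ∩ B).Finite) : T2Space (PsiSpace 𝓐) := by
  have hsep : ∀ (n : ℕ) (y : PsiSpace 𝓐), y ≠ inl n → ∃ u v : Set (PsiSpace 𝓐),
      IsOpen u ∧ IsOpen v ∧ inl n ∈ u ∧ y ∈ v ∧ Disjoint u v := by
    rintro n (m | A) hy
    · exact ⟨_, _, isOpen_singleton_inl n, isOpen_singleton_inl m, rfl, rfl,
        disjoint_singleton.2 hy.symm⟩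
    · exact ⟨_, _, isOpen_singleton_inl n, isOpen_basicNhd A {n}, rfl, mem_insert _ _,
        disjoint_singleton_left.2 (by simp)⟩
  refine ⟨fun x y hxy => ?_⟩
  rcases x with n | A
  · exact hsep n y hxy.symm
  rcases y with m | B
  · obtain ⟨u, v, hu, hv, hmu, hAv, huv⟩ := hsep m (inr A) hxy
    exact ⟨v, u, hv, hu, hAv, hmu, huv.symm⟩
  have hAB : A ≠ B := fun h => hxy (congrArg inr h)
  have hfin : ((A : Set ℕ) ∩ B).Finite := had A.2 B.2 (Subtype.coe_injective.ne hAB)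
  exact ⟨_, _, isOpen_basicNhd A hfin.toFinset, isOpen_basicNhd B hfin.toFinset, mem_insert _ _,
    mem_insert _ _, disjoint_basicNhd hAB (by simp)⟩

theorem isCompact_basicNhd (A : 𝓐) (F : Finset ℕ) : IsCompact (basicNhd A F) := by
  have hconv : Tendsto (fun m : ↥((A : Set ℕ) \ F) => inl (𝓐 := 𝓐) m) cofinite (𝓝 (inr A)) := by
    refine (hasBasis_nhds_inr A).tendsto_right_iff.2 fun G _ => ?_
    refine (G.finite_toSet.preimage Subtype.val_injective.injOn).subset fun m hm => ?_
    by_contra hmG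
    exact hm (inl_mem_basicNhd.2 ⟨m.2.1, hmG⟩)
  simpa only [basicNhd, image_eq_range] using hconv.isCompact_insert_range_of_cofinite

def compactNhd : PsiSpace 𝓐 → Set (PsiSpace 𝓐) :=
  Sum.elim (fun n => {inl n}) fun A => basicNhd A ∅

theorem isOpen_compactNhd (x : PsiSpace 𝓐) : IsOpen (compactNhd x) := by
  rcases x with n | A
  exacts [isOpen_singleton_inl n, isOpen_basicNhd A ∅]

theorem isCompact_compactNhd (x : PsiSpace 𝓐) : IsCompact (compactNhd x) := by
  rcases x with n | A
  exacts [isCompact_singleton, isCompact_basicNhd A ∅]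

theorem mem_compactNhd_self (x : PsiSpace 𝓐) : x ∈ compactNhd x := by
  rcases x with n | A
  exacts [rfl, mem_insert _ _]

theorem eq_of_inr_mem_compactNhd {A : 𝓐} {x : PsiSpace 𝓐} (h : inr A ∈ compactNhd x) :
    x = inr A := by
  rcases x with n | B
  · exact absurd h inr_ne_inl
  · exact congrArg inr (inr_mem_basicNhd.1 h).symm

instance : WeaklyLocallyCompactSpace (PsiSpace 𝓐) :=
  ⟨fun x => ⟨_, isCompact_compactNhd x, (isOpen_compactNhd x).mem_nhds (mem_compactNhd_self x)⟩⟩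

theorem exists_finset_subset_biUnion_compactNhd {K : Set (PsiSpace 𝓐)} (hK : IsCompact K) :
    ∃ t : Finset (PsiSpace 𝓐), K ⊆ ⋃ x ∈ t, compactNhd x :=
  hK.elim_finite_subcover compactNhd isOpen_compactNhd fun x _ =>
    mem_iUnion.2 ⟨x, mem_compactNhd_self x⟩

theorem finite_setOf_inr_mem {K : Set (PsiSpace 𝓐)} (hK : IsCompact K) :
    {A : 𝓐 | inr A ∈ K}.Finite := by
  obtain ⟨t, hKt⟩ := exists_finset_subset_biUnion_compactNhd hK
  refine (t.finite_toSet.preimage (Sum.inr_injective.injOn)).subset fun A hA => ?_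
  obtain ⟨x, hx, hAx⟩ := mem_iUnion₂.1 (hKt hA)
  obtain rfl := eq_of_inr_mem_compactNhd hAx
  exact hx

theorem finite_inter_setOf_inl_mem {C : Set ℕ} (hC : ∀ A ∈ 𝓐, (C ∩ A).Finite)
    {K : Set (PsiSpace 𝓐)} (hK : IsCompact K) : (C ∩ {n | inl n ∈ K}).Finite := by
  obtain ⟨t, hKt⟩ := exists_finset_subset_biUnion_compactNhd hK
  have hpiece : ∀ x : PsiSpace 𝓐, (C ∩ {n | inl n ∈ compactNhd x}).Finite := by
    rintro (m | A)
    · exact (finite_singleton m).subset fun n hn => inl_inj.1 hn.2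
    · exact (hC A A.2).subset fun n hn => ⟨hn.1, (inl_mem_basicNhd.1 hn.2).1⟩
  refine (t.finite_toSet.biUnion fun x _ => hpiece x).subset fun n ⟨hnC, hnK⟩ => ?_
  obtain ⟨x, hx, hnx⟩ := mem_iUnion₂.1 (hKt hnK)
  exact mem_iUnion₂.2 ⟨x, hx, hnC, hnx⟩

theorem isDecreasingLocalPiBase_infty {C : Set ℕ} (hCinf : C.Infinite)
    (hC : ∀ A ∈ 𝓐, (C ∩ A).Finite) :
    IsDecreasingLocalPiBase (∞ : OnePoint (PsiSpace 𝓐))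
      fun k => (↑) '' (inl '' (C ∩ Ici k) : Set (PsiSpace 𝓐)) := by
  refine OnePoint.isDecreasingLocalPiBase_infty (fun k => ?_) (fun k => ?_)
    (fun k l hkl => image_mono (inter_subset_inter_right _ (Ici_subset_Ici.2 hkl))) fun K hK => ?_
  · rw [image_eq_iUnion]
    exact isOpen_biUnion fun n _ => isOpen_singleton_inl n
  · obtain ⟨n, hnC, hkn⟩ := hCinf.exists_gt k
    exact ⟨inl n, n, ⟨hnC, hkn.le⟩, rfl⟩
  · obtain ⟨k, hk⟩ := (finite_inter_setOf_inl_mem hC hK).bddAbove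
    refine ⟨k + 1, disjoint_left.2 ?_⟩
    rintro _ ⟨n, ⟨hnC, hkn⟩, rfl⟩ hnK
    exact absurd (hk ⟨hnC, hnK⟩) (by simp only [mem_Ici] at hkn; omega)

theorem mk_eq_continuum (hcard : #𝓐 = 𝔠) : #(PsiSpace 𝓐) = 𝔠 := by
  rw [PsiSpace, mk_sum, mk_nat, hcard, lift_aleph0, lift_continuum, aleph0_add_continuum]

theorem chiAt_infty (had : 𝓐.Pairwise fun A B => (A ∩ B).Finite) (hcard : #𝓐 = 𝔠) :
    chiAt (∞ : OnePoint (PsiSpace 𝓐)) = 𝔠 := by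
  have := t2Space had
  have : Infinite (PsiSpace 𝓐) := inferInstanceAs (Infinite (ℕ ⊕ 𝓐))
  set 𝒦 := range fun t : Finset (PsiSpace 𝓐) => ⋃ x ∈ t, compactNhd x
  have hcompact : ∀ K ∈ 𝒦, IsCompact K := by
    rintro _ ⟨t, rfl⟩
    exact t.isCompact_biUnion fun x _ => isCompact_compactNhd x
  have hcofinal : ∀ L, IsCompact L → ∃ K ∈ 𝒦, L ⊆ K := fun L hL =>
    let ⟨t, ht⟩ := exists_finset_subset_biUnion_compactNhd hL
    ⟨_, ⟨t, rfl⟩, ht⟩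
  refine chiAt_eq_of_isNhdBase aleph0_le_continuum
    (OnePoint.isNhdBase_infty (fun K hK => (hcompact K hK).isClosed) hcompact hcofinal) ?_
    fun 𝓑 h𝓑 => ?_
  · calc #(_ '' 𝒦) ≤ #𝒦 := mk_image_le
      _ ≤ #(Finset (PsiSpace 𝓐)) := mk_range_le
      _ = 𝔠 := by rw [mk_finset_of_infinite, mk_eq_continuum hcard]
  · have hle := (OnePoint.mk_le_mk_mul_aleph0_of_isNhdBase_infty inr
      (fun K hK => finite_setOf_inr_mem hK) h𝓑).trans (mul_le_max _ _)
    rw [hcard, max_assoc, max_self] at hle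
    exact (le_max_iff.1 hle).resolve_right aleph0_lt_continuum.not_ge

end PsiSpace

/-- the one-point compactification `X` of a Ψ-space over a
non-maximal almost disjoint family `𝓐` of infinite subsets of ℕ with `|𝓐| = 𝔠`
is a separable compact Hausdorff (hence ccc) space in which every point has a
countable decreasing local π-base (so πχd(X) = ℵ₀) while χ(X) = 𝔠; hence
`2^{c(X)·πχd(X)} = 𝔠 < 2^𝔠 = 2^{c(X)·χ(X)}`. -/
theorem onePoint_psiSpace_example (𝓐 : Set (Set ℕ))
    (hinf : ∀ A ∈ 𝓐, A.Infinite)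
    (had : 𝓐.Pairwise fun A B => (A ∩ B).Finite)
    (hnonmax : ∃ C : Set ℕ, C.Infinite ∧ C ∉ 𝓐 ∧ ∀ A ∈ 𝓐, (C ∩ A).Finite)
    (hcard : #↥𝓐 = Cardinal.continuum) :
    TopologicalSpace.SeparableSpace (OnePoint (PsiSpace 𝓐)) ∧
    CompactSpace (OnePoint (PsiSpace 𝓐)) ∧
    T2Space (OnePoint (PsiSpace 𝓐)) ∧
    (∀ 𝓒 : Set (Set (OnePoint (PsiSpace 𝓐))), IsCellular 𝓒 → 𝓒.Countable) ∧
    (∀ p : OnePoint (PsiSpace 𝓐),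
      ∃ A : ℕ → Set (OnePoint (PsiSpace 𝓐)), IsDecreasingLocalPiBase p A) ∧
    (⨆ p : OnePoint (PsiSpace 𝓐), chiAt p) = Cardinal.continuum ∧
    (2 : Cardinal) ^ (ℵ₀ * ℵ₀) = Cardinal.continuum ∧
    Cardinal.continuum < (2 : Cardinal) ^ (ℵ₀ * Cardinal.continuum) := by
  have := PsiSpace.t2Space had
  have := PsiSpace.separableSpace hinf
  obtain ⟨C, hCinf, -, hC⟩ := hnonmax
  refine ⟨inferInstance, inferInstance, inferInstance, fun 𝓒 h𝓒 => h𝓒.countable,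
    fun p => ?_, ?_, ?_, ?_⟩
  · induction p using OnePoint.rec with
    | infty => exact ⟨_, PsiSpace.isDecreasingLocalPiBase_infty hCinf hC⟩
    | coe x => exact exists_isDecreasingLocalPiBase _
  · rw [OnePoint.iSup_chiAt, PsiSpace.chiAt_infty had hcard]
  · rw [aleph0_mul_aleph0, two_power_aleph0]
  · rw [aleph0_mul_continuum]
    exact cantor _
end
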